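/- arXiv:2512.09659 — 4 statements merged into one kernel-verified Lean document; each statement's English description precedes it below -/
import Mathlib

section
/- Uniform-over-p Slutsky theorem (sum): Let X_{n,p}, Y_{n,p}, X_p (n, p ∈ ℕ) be real-valued random variables and {c_p}_{p∈ℕ} a bounded sequence of real numbers with countable closure. Suppose the laws of {X_p}_{p∈ℕ} satisfy (A1) and (A2), X_{n,p} ⇒ X_p uniformly-over-p, and Y_{n,p} →_P c_p uniformly-over-p. Then X_{n,p} + Y_{n,p} ⇒ X_p + c_p uniformly-over-p. -/
open MeasureTheory Filter Set
open scoped ProbabilityTheory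

/-- `x` is an equi-continuity point of the family of functions `F p`. -/
def EquiContAt (F : ℕ → ℝ → ℝ) (x : ℝ) : Prop :=
  ∀ ε > (0 : ℝ), ∃ δ > (0 : ℝ), ∀ p : ℕ, ∀ y, |y - x| < δ → |F p y - F p x| < ε

section SlutskyHelpers

set_option linter.unusedSectionVars false

variable {Ω : Type*} [MeasureSpace Ω] [IsProbabilityMeasure (ℙ : Measure Ω)]

private lemma integrable_comp_bcf (f : BoundedContinuousFunction ℝ ℝ) {U : Ω → ℝ}
    (hU : Measurable U) : Integrable (fun ω => f (U ω)) ℙ :=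
  ⟨(f.continuous.measurable.comp hU).aestronglyMeasurable,
   (HasFiniteIntegral.of_bounded (C := ‖f‖) (ae_of_all _ fun ω => f.norm_coe_le_norm (U ω)))⟩

private lemma toReal_union_le (s t : Set Ω) :
    (ℙ (s ∪ t)).toReal ≤ (ℙ s).toReal + (ℙ t).toReal := by
  rw [← ENNReal.toReal_add (measure_ne_top _ _) (measure_ne_top _ _)]
  exact ENNReal.toReal_mono (by finiteness) (measure_union_le s t)

private lemma toReal_mono_set {s t : Set Ω} (h : s ⊆ t) : (ℙ s).toReal ≤ (ℙ t).toReal :=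
  ENNReal.toReal_mono (measure_ne_top _ _) (measure_mono h)

private lemma abs_integral_sub_le (f : BoundedContinuousFunction ℝ ℝ) {U V : Ω → ℝ}
    (hU : Measurable U) (hV : Measurable V) {E : Set Ω} (hE : MeasurableSet E)
    {a : ℝ} (ha : 0 ≤ a) (h1 : ∀ ω ∈ E, |f (U ω) - f (V ω)| ≤ a) :
    |(∫ ω, f (U ω)) - ∫ ω, f (V ω)| ≤ a + 2 * ‖f‖ * (ℙ Eᶜ).toReal := by
  have hiU := integrable_comp_bcf f hU
  have hiV := integrable_comp_bcf f hV
  have hind : Integrable (Eᶜ.indicator fun _ => 2*‖f‖) ℙ :=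
    (integrable_const (2*‖f‖)).indicator hE.compl
  have hbound : ∀ ω, |f (U ω) - f (V ω)| ≤ a + Eᶜ.indicator (fun _ => 2*‖f‖) ω := by
    intro ω
    by_cases h : ω ∈ E
    · rw [Set.indicator_of_notMem (by simpa using h)]
      simpa using h1 ω h
    · rw [Set.indicator_of_mem (by simpa using h)]
      have h2 : |f (U ω) - f (V ω)| ≤ 2 * ‖f‖ := by
        calc |f (U ω) - f (V ω)| ≤ |f (U ω)| + |f (V ω)| := abs_sub _ _
          _ ≤ ‖f‖ + ‖f‖ := by
            have := f.norm_coe_le_norm (U ω); have := f.norm_coe_le_norm (V ω)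
            simp only [Real.norm_eq_abs] at *; linarith
          _ = 2 * ‖f‖ := by ring
      linarith
  rw [← integral_sub hiU hiV]
  calc |∫ ω, (f (U ω) - f (V ω))| ≤ ∫ ω, |f (U ω) - f (V ω)| := by
        simpa [Real.norm_eq_abs] using
          norm_integral_le_integral_norm (μ := (ℙ : Measure Ω)) (fun ω => f (U ω) - f (V ω))
    _ ≤ ∫ ω, (a + Eᶜ.indicator (fun _ => 2*‖f‖) ω) :=
        integral_mono (hiU.sub hiV).abs ((integrable_const a).add hind) hbound
    _ = a + 2 * ‖f‖ * (ℙ Eᶜ).toReal := by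
        rw [integral_add (integrable_const a) hind, integral_const,
          integral_indicator_const _ hE.compl]
        simp [smul_eq_mul, measureReal_def]; ring

private def bump (r : ℝ) : BoundedContinuousFunction ℝ ℝ :=
  BoundedContinuousFunction.ofNormedAddCommGroup (fun x => min 1 (max 0 (|x| - r)))
    (continuous_const.min ((continuous_const.max (continuous_abs.sub continuous_const)))) 1
    (fun x => by
      rw [Real.norm_eq_abs, abs_le]
      constructor
      · have : (0:ℝ) ≤ min 1 (max 0 (|x| - r)) := le_min zero_le_one (le_max_left _ _)
        linarith
      · exact min_le_left _ _)

private lemma bump_apply (r x : ℝ) : bump r x = min 1 (max 0 (|x| - r)) := rfl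

private lemma bump_ge_indicator (r : ℝ) (x : ℝ) :
    ({y : ℝ | r + 1 ≤ |y|}).indicator (fun _ => (1:ℝ)) x ≤ bump r x := by
  rw [bump_apply]
  by_cases h : r + 1 ≤ |x|
  · simp only [Set.indicator_apply, Set.mem_setOf_eq, if_pos h]
    have : (1:ℝ) ≤ max 0 (|x| - r) := le_max_of_le_right (by linarith)
    exact le_min le_rfl this
  · simp only [Set.indicator_apply, Set.mem_setOf_eq, if_neg h]
    exact le_min zero_le_one (le_max_left _ _)

private lemma bump_le_indicator (r : ℝ) (x : ℝ) :
    bump r x ≤ ({y : ℝ | r < |y|}).indicator (fun _ => (1:ℝ)) x := by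
  rw [bump_apply]
  by_cases h : r < |x|
  · simp only [Set.indicator_apply, Set.mem_setOf_eq, if_pos h]
    exact min_le_left _ _
  · simp only [Set.indicator_apply, Set.mem_setOf_eq, if_neg h]
    have : max (0:ℝ) (|x| - r) = 0 := max_eq_left (by push_neg at h; linarith)
    rw [this]; simp

end SlutskyHelpers

/-- **Uniform-over-p Slutsky theorem (sum).**
If `X n p ⟹ X' p` uniformly-over-`p`, `Y n p →_P c p` uniformly-over-`p`, where
`c` is a bounded real sequence with countable closure and the laws of the `X' p`
satisfy (A1) (tightness) and (A2) (co-countably many equi-continuity points of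
their distribution functions), then `X n p + Y n p ⟹ X' p + c p`
uniformly-over-`p`. -/
theorem uniform_over_p_slutsky_add
    {Ω : Type*} [MeasureSpace Ω] [IsProbabilityMeasure (ℙ : Measure Ω)]
    (X Y : ℕ → ℕ → Ω → ℝ) (X' : ℕ → Ω → ℝ) (c : ℕ → ℝ)
    (hXmeas : ∀ n p, Measurable (X n p)) (hYmeas : ∀ n p, Measurable (Y n p))
    (hX'meas : ∀ p, Measurable (X' p))
    (hc_bdd : ∃ M : ℝ, ∀ p, |c p| ≤ M)
    (hc_ctble : Set.Countable (closure (Set.range c)))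
    (hA1 : ∀ ε > (0 : ℝ), ∃ r : ℝ, ∀ p : ℕ, (ℙ {ω | r < |X' p ω|}).toReal < ε)
    (hA2 : Set.Countable
      {x | ¬ EquiContAt (fun p x => (ℙ {ω | X' p ω ≤ x}).toReal) x})
    (hX : ∀ f : BoundedContinuousFunction ℝ ℝ, ∀ ε > (0 : ℝ), ∃ N : ℕ, ∀ n ≥ N, ∀ p : ℕ,
      |(∫ ω, f (X n p ω)) - ∫ ω, f (X' p ω)| < ε)
    (hY : ∀ ε > (0 : ℝ), ∀ η > (0 : ℝ), ∃ N : ℕ, ∀ n ≥ N, ∀ p : ℕ,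
      (ℙ {ω | ε < |Y n p ω - c p|}).toReal < η) :
    ∀ f : BoundedContinuousFunction ℝ ℝ, ∀ ε > (0 : ℝ), ∃ N : ℕ, ∀ n ≥ N, ∀ p : ℕ,
      |(∫ ω, f (X n p ω + Y n p ω)) - ∫ ω, f (X' p ω + c p)| < ε := by
  intro f ε hε
  obtain ⟨M₀, hM₀⟩ := hc_bdd
  have hM0 : (0:ℝ) ≤ M₀ := le_trans (abs_nonneg _) (hM₀ 0)
  set B := ‖f‖ with hBdef
  have hB0 : (0:ℝ) ≤ B := norm_nonneg f
  set η' : ℝ := ε/8 with hη'def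
  set η : ℝ := ε/(48*(B+1)) with hηdef
  have hη'pos : 0 < η' := by positivity
  have hηpos : 0 < η := by positivity
  obtain ⟨r₀, hr₀⟩ := hA1 η hηpos
  set r : ℝ := max r₀ 0 with hrdef
  have hr0 : (0:ℝ) ≤ r := le_max_right _ _
  have hrP : ∀ p, (ℙ {ω | r < |X' p ω|}).toReal < η := by
    intro p
    refine lt_of_le_of_lt (toReal_mono_set (t := {ω | r₀ < |X' p ω|}) ?_) (hr₀ p)
    intro ω h
    have h' : r < |X' p ω| := h
    have hr' : r₀ ≤ r := by rw [hrdef]; exact le_max_left _ _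
    exact lt_of_le_of_lt hr' h'
  set R : ℝ := r + M₀ + 3 with hRdef
  -- uniform continuity of f on [-R, R]
  have huc : UniformContinuousOn f (Icc (-R) R) :=
    (isCompact_Icc).uniformContinuousOn_of_continuous f.continuous.continuousOn
  rw [Metric.uniformContinuousOn_iff] at huc
  obtain ⟨δ₀, hδ₀pos, hδ₀⟩ := huc η' hη'pos
  set δ : ℝ := (min δ₀ 1)/2 with hδdef
  have hmin : 0 < min δ₀ 1 := lt_min hδ₀pos one_pos
  have hδpos : 0 < δ := by rw [hδdef]; linarith
  have hδ1 : δ ≤ 1 := by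
    have : min δ₀ 1 ≤ 1 := min_le_right _ _
    rw [hδdef]; linarith
  have hfδ : ∀ x y, x ∈ Icc (-R) R → y ∈ Icc (-R) R → |x - y| ≤ δ → |f x - f y| ≤ η' := by
    intro x y hx hy hxy
    have hd : dist x y < δ₀ := by
      rw [Real.dist_eq]
      have h1 : min δ₀ 1 ≤ δ₀ := min_le_left _ _
      rw [hδdef] at hxy; linarith
    have := hδ₀ x hx y hy hd
    rw [Real.dist_eq] at this; linarith
  -- grid of translates
  set t : ℕ → ℝ := fun i => -M₀ + i*δ with htdef
  set K : ℕ := ⌊2*M₀/δ⌋₊ with hKdef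
  have hgrid : ∀ p, ∃ i ≤ K, |c p - t i| ≤ δ ∧ |t i| ≤ M₀ + 1 := by
    intro p
    have hcp := abs_le.mp (hM₀ p)
    have h0 : (0:ℝ) ≤ c p + M₀ := by linarith
    set i : ℕ := ⌊(c p + M₀)/δ⌋₊ with hidef
    have h1 : (i:ℝ)*δ ≤ c p + M₀ :=
      (le_div_iff₀ hδpos).mp (Nat.floor_le (div_nonneg h0 hδpos.le))
    have h2 : c p + M₀ < ((i:ℝ)+1)*δ := by
      have h3 := Nat.lt_floor_add_one ((c p + M₀)/δ)
      exact (div_lt_iff₀ hδpos).mp (by push_cast at h3 ⊢; linarith)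
    have hct : |c p - t i| ≤ δ := by
      rw [htdef]
      simp only []
      rw [abs_le]
      constructor <;> [nlinarith; nlinarith]
    refine ⟨i, ?_, hct, ?_⟩
    · exact Nat.floor_mono (by gcongr; linarith)
    · have := abs_le.mp hct
      rw [abs_le]
      constructor <;> nlinarith
  -- translated test functions
  set F : ℕ → BoundedContinuousFunction ℝ ℝ := fun i =>
    f.compContinuous ⟨fun x => x + t i, continuous_id.add continuous_const⟩ with hFdef
  have hFapp : ∀ i x, F i x = f (x + t i) := fun i x => rfl
  choose N₂ hN₂ using fun i : ℕ => hX (F i) η hηpos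
  obtain ⟨N₀, hN₀⟩ := hX (bump r) η hηpos
  obtain ⟨N₁, hN₁⟩ := hY δ hδpos η hηpos
  refine ⟨max (max N₀ N₁) ((Finset.range (K+1)).sup N₂), fun n hn p => ?_⟩
  have hnN₀ : N₀ ≤ n := le_trans (le_trans (le_max_left _ _) (le_max_left _ _)) hn
  have hnN₁ : N₁ ≤ n := le_trans (le_trans (le_max_right _ _) (le_max_left _ _)) hn
  have hS : MeasurableSet {x : ℝ | r + 1 ≤ |x|} :=
    measurableSet_le measurable_const continuous_abs.measurable
  have hS' : MeasurableSet {x : ℝ | r < |x|} :=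
    measurableSet_lt measurable_const continuous_abs.measurable
  -- uniform tightness of X n
  have hXn_tight : ∀ q, (ℙ (X n q ⁻¹' {x : ℝ | r + 1 ≤ |x|})).toReal < 2*η := by
    intro q
    have e1 : (ℙ (X n q ⁻¹' {x : ℝ | r + 1 ≤ |x|})).toReal ≤ ∫ ω, bump r (X n q ω) := by
      have h := integral_indicator_const (μ := (ℙ : Measure Ω)) (1:ℝ) ((hXmeas n q) hS)
      rw [smul_eq_mul, mul_one, measureReal_def] at h
      rw [← h]
      refine integral_mono ((integrable_const (1:ℝ)).indicator ((hXmeas n q) hS))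
        (integrable_comp_bcf (bump r) (hXmeas n q)) ?_
      intro ω
      exact bump_ge_indicator r (X n q ω)
    have e2 : ∫ ω, bump r (X' q ω) ≤ (ℙ (X' q ⁻¹' {x : ℝ | r < |x|})).toReal := by
      have h := integral_indicator_const (μ := (ℙ : Measure Ω)) (1:ℝ) ((hX'meas q) hS')
      rw [smul_eq_mul, mul_one, measureReal_def] at h
      rw [← h]
      refine integral_mono (integrable_comp_bcf (bump r) (hX'meas q))
        ((integrable_const (1:ℝ)).indicator ((hX'meas q) hS')) ?_
      intro ω
      exact bump_le_indicator r (X' q ω)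
    have e3 := abs_lt.mp (hN₀ n hnN₀ q)
    have e4 : (ℙ (X' q ⁻¹' {x : ℝ | r < |x|})).toReal < η := hrP q
    linarith [e3.1, e3.2]
  -- pick grid point for this p
  obtain ⟨i, hiK, hci, hti⟩ := hgrid p
  have hnN₂ : N₂ i ≤ n :=
    le_trans (le_trans (Finset.le_sup (Finset.mem_range.mpr (Nat.lt_succ_of_le hiK)))
      (le_max_right _ _)) hn
  have hcpb := abs_le.mp (hM₀ p)
  have hcib := abs_le.mp hci
  have htib := abs_le.mp hti
  -- events
  have hE₁ : MeasurableSet {ω | |Y n p ω - c p| ≤ δ} :=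
    measurableSet_le ((hYmeas n p).sub measurable_const).abs measurable_const
  have hE₂ : MeasurableSet {ω | |X n p ω| ≤ r + 1} :=
    measurableSet_le (hXmeas n p).abs measurable_const
  have hE₃ : MeasurableSet {ω | |X' p ω| ≤ r} :=
    measurableSet_le (hX'meas p).abs measurable_const
  have hE₂c : (ℙ {ω | |X n p ω| ≤ r + 1}ᶜ).toReal < 2*η := by
    refine lt_of_le_of_lt (toReal_mono_set ?_) (hXn_tight p)
    intro ω h
    have : ¬ (|X n p ω| ≤ r + 1) := h
    exact (not_le.mp this).le
  have hE₁c : (ℙ {ω | |Y n p ω - c p| ≤ δ}ᶜ).toReal < η := by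
    have heq : {ω | |Y n p ω - c p| ≤ δ}ᶜ = {ω | δ < |Y n p ω - c p|} := by
      ext ω; simp [not_le]
    rw [heq]; exact hN₁ n hnN₁ p
  have hE₃c : (ℙ {ω | |X' p ω| ≤ r}ᶜ).toReal < η := by
    refine lt_of_le_of_lt (toReal_mono_set ?_) (hrP p)
    intro ω h
    have : ¬ (|X' p ω| ≤ r) := h
    exact not_le.mp this
  -- Term A
  have hA : |(∫ ω, f (X n p ω + Y n p ω)) - ∫ ω, f (X n p ω + c p)| ≤ η' + 2*B*(3*η) := by
    have key := abs_integral_sub_le f (U := fun ω => X n p ω + Y n p ω)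
      (V := fun ω => X n p ω + c p)
      ((hXmeas n p).add (hYmeas n p)) ((hXmeas n p).add_const (c p))
      (hE₁.inter hE₂) hη'pos.le ?_
    · rw [← hBdef] at key
      have hcompl : (ℙ ({ω | |Y n p ω - c p| ≤ δ} ∩ {ω | |X n p ω| ≤ r + 1})ᶜ).toReal
          ≤ (ℙ {ω | |Y n p ω - c p| ≤ δ}ᶜ).toReal + (ℙ {ω | |X n p ω| ≤ r + 1}ᶜ).toReal := by
        rw [Set.compl_inter]; exact toReal_union_le _ _
      have h3 : (ℙ ({ω | |Y n p ω - c p| ≤ δ} ∩ {ω | |X n p ω| ≤ r + 1})ᶜ).toReal ≤ 3*η := by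
        linarith
      have hp := mul_le_mul_of_nonneg_left h3 (by linarith : (0:ℝ) ≤ 2*B)
      linarith
    · intro ω hω
      obtain ⟨h1, h2⟩ := hω
      have hy := abs_le.mp (show |Y n p ω - c p| ≤ δ from h1)
      have hx := abs_le.mp (show |X n p ω| ≤ r + 1 from h2)
      refine hfδ _ _ ?_ ?_ ?_
      · simp only [Set.mem_Icc, hRdef]; constructor <;> linarith
      · simp only [Set.mem_Icc, hRdef]; constructor <;> linarith
      · have heq : X n p ω + Y n p ω - (X n p ω + c p) = Y n p ω - c p := by ring
        rw [heq]; exact (show |Y n p ω - c p| ≤ δ from h1)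
  -- Term B1
  have hB1 : |(∫ ω, f (X n p ω + c p)) - ∫ ω, f (X n p ω + t i)| ≤ η' + 2*B*(2*η) := by
    have key := abs_integral_sub_le f (U := fun ω => X n p ω + c p)
      (V := fun ω => X n p ω + t i)
      ((hXmeas n p).add_const (c p)) ((hXmeas n p).add_const (t i))
      hE₂ hη'pos.le ?_
    · rw [← hBdef] at key
      have hp := mul_le_mul_of_nonneg_left hE₂c.le (by linarith : (0:ℝ) ≤ 2*B)
      linarith
    · intro ω hω
      have hx := abs_le.mp (show |X n p ω| ≤ r + 1 from hω)
      refine hfδ _ _ ?_ ?_ ?_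
      · simp only [Set.mem_Icc, hRdef]; constructor <;> linarith
      · simp only [Set.mem_Icc, hRdef]; constructor <;> linarith
      · have heq : X n p ω + c p - (X n p ω + t i) = c p - t i := by ring
        rw [heq]; exact hci
  -- Term B2
  have hB2 : |(∫ ω, f (X n p ω + t i)) - ∫ ω, f (X' p ω + t i)| < η := by
    have := hN₂ i n hnN₂ p
    simpa only [hFapp] using this
  -- Term B3
  have hB3 : |(∫ ω, f (X' p ω + t i)) - ∫ ω, f (X' p ω + c p)| ≤ η' + 2*B*η := by
    have key := abs_integral_sub_le f (U := fun ω => X' p ω + t i)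
      (V := fun ω => X' p ω + c p)
      ((hX'meas p).add_const (t i)) ((hX'meas p).add_const (c p))
      hE₃ hη'pos.le ?_
    · rw [← hBdef] at key
      have hp := mul_le_mul_of_nonneg_left hE₃c.le (by linarith : (0:ℝ) ≤ 2*B)
      linarith
    · intro ω hω
      have hx := abs_le.mp (show |X' p ω| ≤ r from hω)
      refine hfδ _ _ ?_ ?_ ?_
      · simp only [Set.mem_Icc, hRdef]; constructor <;> linarith
      · simp only [Set.mem_Icc, hRdef]; constructor <;> linarith
      · have heq : X' p ω + t i - (X' p ω + c p) = -(c p - t i) := by ring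
        rw [heq, abs_neg]; exact hci
  -- combine
  have t1 := abs_sub_le (∫ ω, f (X n p ω + Y n p ω)) (∫ ω, f (X n p ω + c p))
    (∫ ω, f (X' p ω + c p))
  have t2 := abs_sub_le (∫ ω, f (X n p ω + c p)) (∫ ω, f (X n p ω + t i))
    (∫ ω, f (X' p ω + c p))
  have t3 := abs_sub_le (∫ ω, f (X n p ω + t i)) (∫ ω, f (X' p ω + t i))
    (∫ ω, f (X' p ω + c p))
  have hkey : 12*(B+1)*η = ε/4 := by
    rw [hηdef]; field_simp; ring
  have hexp : 12*(B+1)*η = 12*B*η + 12*η := by ring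
  have hBη : 12*B*η + η ≤ ε/4 := by linarith
  have hη'val : η' = ε/8 := hη'def
  linarith
end

section
/- Uniform-over-p Slutsky theorem (product): Let X_{n,p}, Y_{n,p}, X_p (n, p ∈ ℕ) be real-valued random variables and {c_p}_{p∈ℕ} a bounded sequence of real numbers with countable closure. Suppose the laws of {X_p}_{p∈ℕ} satisfy (A1) and (A2), X_{n,p} ⇒ X_p uniformly-over-p, and Y_{n,p} →_P c_p uniformly-over-p. Then X_{n,p} · Y_{n,p} ⇒ c_p · X_p uniformly-over-p. -/
open MeasureTheory Filter Set
open scoped ProbabilityTheory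

private lemma slutsky_bdd_integrable {Ω : Type*} [MeasureSpace Ω]
    [IsProbabilityMeasure (ℙ : Measure Ω)]
    (u : Ω → ℝ) (hu : Measurable u) (C : ℝ) (hb : ∀ ω, |u ω| ≤ C) : Integrable u ℙ :=
  Integrable.mono' (integrable_const C) hu.aestronglyMeasurable (ae_of_all _ hb)

private lemma slutsky_meas_le_integral {Ω : Type*} [MeasureSpace Ω]
    [IsProbabilityMeasure (ℙ : Measure Ω)]
    (A : Set Ω) (hA : MeasurableSet A) (h : Ω → ℝ) (hint : Integrable h ℙ)
    (hle : ∀ ω, A.indicator (fun _ => (1:ℝ)) ω ≤ h ω) :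
    (ℙ A).toReal ≤ ∫ ω, h ω := by
  have e : ∫ ω, A.indicator (fun _ => (1:ℝ)) ω = (ℙ A).toReal := by
    rw [integral_indicator_const (1:ℝ) hA]; simp [Measure.real]
  rw [← e]
  exact integral_mono ((integrable_const (1:ℝ)).indicator hA) hint hle

private lemma slutsky_integral_le_meas {Ω : Type*} [MeasureSpace Ω]
    [IsProbabilityMeasure (ℙ : Measure Ω)]
    (B : Set Ω) (hB : MeasurableSet B) (h : Ω → ℝ) (hint : Integrable h ℙ)
    (hle : ∀ ω, h ω ≤ B.indicator (fun _ => (1:ℝ)) ω) :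
    ∫ ω, h ω ≤ (ℙ B).toReal := by
  have e : ∫ ω, B.indicator (fun _ => (1:ℝ)) ω = (ℙ B).toReal := by
    rw [integral_indicator_const (1:ℝ) hB]; simp [Measure.real]
  rw [← e]
  exact integral_mono hint ((integrable_const (1:ℝ)).indicator hB) hle

/-- Main estimate: if `u, v` are bounded by `C` and `|u-v| ≤ α` off a bad set `B`, then
the integrals differ by at most `α + 2C·ℙ(B)`. -/
private lemma slutsky_main_est {Ω : Type*} [MeasureSpace Ω]
    [IsProbabilityMeasure (ℙ : Measure Ω)]
    (u v : Ω → ℝ) (hu : Measurable u) (hv : Measurable v) (C : ℝ)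
    (hub : ∀ ω, |u ω| ≤ C) (hvb : ∀ ω, |v ω| ≤ C)
    (B : Set Ω) (hB : MeasurableSet B) (α : ℝ) (hα : 0 ≤ α)
    (hgood : ∀ ω ∉ B, |u ω - v ω| ≤ α) :
    |(∫ ω, u ω) - ∫ ω, v ω| ≤ α + 2*C*(ℙ B).toReal := by
  have hΩ : Nonempty Ω := by
    by_contra h
    rw [not_nonempty_iff] at h
    have h1 := measure_univ (μ := (ℙ : Measure Ω))
    rw [Set.univ_eq_empty_iff.mpr h, measure_empty] at h1
    exact zero_ne_one h1
  obtain ⟨ω0⟩ := hΩ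
  have hC : 0 ≤ C := le_trans (abs_nonneg _) (hub ω0)
  have hui := slutsky_bdd_integrable u hu C hub
  have hvi := slutsky_bdd_integrable v hv C hvb
  have hbound : ∀ ω, |u ω - v ω| ≤ α + 2*C * B.indicator (fun _ => (1:ℝ)) ω := by
    intro ω
    by_cases hω : ω ∈ B
    · simp only [indicator_of_mem hω]
      have := abs_sub (u ω) (v ω)
      calc |u ω - v ω| ≤ |u ω| + |v ω| := abs_sub _ _
        _ ≤ C + C := add_le_add (hub ω) (hvb ω)
        _ ≤ α + 2*C*1 := by linarith
    · simp only [indicator_of_notMem hω, mul_zero, add_zero]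
      exact hgood ω hω
  have hind : Integrable (fun ω => α + 2*C * B.indicator (fun _ => (1:ℝ)) ω) ℙ :=
    (integrable_const α).add (((integrable_const (1:ℝ)).indicator hB).const_mul _)
  calc |(∫ ω, u ω) - ∫ ω, v ω| = |∫ ω, (u ω - v ω)| := by rw [integral_sub hui hvi]
    _ ≤ ∫ ω, |u ω - v ω| := by
        simpa [Real.norm_eq_abs] using norm_integral_le_integral_norm (fun ω => u ω - v ω) (μ := (ℙ : Measure Ω))
    _ ≤ ∫ ω, (α + 2*C * B.indicator (fun _ => (1:ℝ)) ω) :=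
        integral_mono (hui.sub hvi).abs hind hbound
    _ = α + 2*C*(ℙ B).toReal := by
        rw [integral_add (integrable_const α) (((integrable_const (1:ℝ)).indicator hB).const_mul _),
          integral_const, integral_const_mul, integral_indicator_const (1:ℝ) hB]
        simp [Measure.real]

private lemma slutsky_unif_cont (f : BoundedContinuousFunction ℝ ℝ) (K : ℝ) (ε : ℝ) (hε : 0 < ε) :
    ∃ δ > 0, ∀ a ∈ Set.Icc (-K) K, ∀ b ∈ Set.Icc (-K) K, |a - b| < δ → |f a - f b| < ε := by
  have hc : UniformContinuousOn f (Set.Icc (-K) K) :=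
    (isCompact_Icc).uniformContinuousOn_of_continuous f.continuous.continuousOn
  rw [Metric.uniformContinuousOn_iff] at hc
  obtain ⟨δ, hδ, h⟩ := hc ε hε
  exact ⟨δ, hδ, fun a ha b hb hab => by
    have := h a ha b hb (by rwa [Real.dist_eq]); rwa [Real.dist_eq] at this⟩

set_option maxHeartbeats 1000000 in
/-- **Uniform-over-p Slutsky theorem (product).**
If `X n p ⟹ X' p` uniformly-over-`p`, `Y n p →_P c p` uniformly-over-`p`, where
`c` is a bounded real sequence with countable closure and the laws of the `X' p`
satisfy (A1) (tightness) and (A2) (co-countably many equi-continuity points of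
their distribution functions), then `X n p * Y n p ⟹ c p * X' p`
uniformly-over-`p`. -/
theorem uniform_over_p_slutsky_mul
    {Ω : Type*} [MeasureSpace Ω] [IsProbabilityMeasure (ℙ : Measure Ω)]
    (X Y : ℕ → ℕ → Ω → ℝ) (X' : ℕ → Ω → ℝ) (c : ℕ → ℝ)
    (hXmeas : ∀ n p, Measurable (X n p)) (hYmeas : ∀ n p, Measurable (Y n p))
    (hX'meas : ∀ p, Measurable (X' p))
    (hc_bdd : ∃ M : ℝ, ∀ p, |c p| ≤ M)
    (hc_ctble : Set.Countable (closure (Set.range c)))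
    (hA1 : ∀ ε > (0 : ℝ), ∃ r : ℝ, ∀ p : ℕ, (ℙ {ω | r < |X' p ω|}).toReal < ε)
    (hA2 : Set.Countable
      {x | ¬ EquiContAt (fun p x => (ℙ {ω | X' p ω ≤ x}).toReal) x})
    (hX : ∀ f : BoundedContinuousFunction ℝ ℝ, ∀ ε > (0 : ℝ), ∃ N : ℕ, ∀ n ≥ N, ∀ p : ℕ,
      |(∫ ω, f (X n p ω)) - ∫ ω, f (X' p ω)| < ε)
    (hY : ∀ ε > (0 : ℝ), ∀ η > (0 : ℝ), ∃ N : ℕ, ∀ n ≥ N, ∀ p : ℕ,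
      (ℙ {ω | ε < |Y n p ω - c p|}).toReal < η) :
    ∀ f : BoundedContinuousFunction ℝ ℝ, ∀ ε > (0 : ℝ), ∃ N : ℕ, ∀ n ≥ N, ∀ p : ℕ,
      |(∫ ω, f (X n p ω * Y n p ω)) - ∫ ω, f (c p * X' p ω)| < ε := by
  intro f ε hε
  obtain ⟨M, hM⟩ := hc_bdd
  have hM0 : (0:ℝ) ≤ M := le_trans (abs_nonneg _) (hM 0)
  obtain ⟨C, hC0, hfb⟩ : ∃ C : ℝ, 0 ≤ C ∧ ∀ x : ℝ, |f x| ≤ C :=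
    ⟨‖f‖, norm_nonneg f, fun x => by simpa [Real.norm_eq_abs] using f.norm_coe_le_norm x⟩
  obtain ⟨η, hη, hηC⟩ : ∃ η : ℝ, 0 < η ∧ η * (C+1) = ε/64 :=
    ⟨ε/(64*(C+1)), by positivity, by field_simp⟩
  obtain ⟨r0, hr0⟩ := hA1 η hη
  obtain ⟨r, hrnn, hr⟩ : ∃ r : ℝ, 0 ≤ r ∧ ∀ p, (ℙ {ω | r < |X' p ω|}).toReal < η := by
    refine ⟨max r0 0, le_max_right _ _, fun p => ?_⟩
    refine lt_of_le_of_lt ?_ (hr0 p)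
    refine ENNReal.toReal_mono (measure_ne_top _ _) (measure_mono ?_)
    intro ω hω
    exact lt_of_le_of_lt (le_max_left r0 0) hω
  obtain ⟨R, hRr, hR1, hR0⟩ : ∃ R : ℝ, r + 1 ≤ R ∧ 1 ≤ R ∧ 0 < R :=
    ⟨r + 1, le_refl _, by linarith, by linarith⟩
  obtain ⟨K, hK1, hK2⟩ : ∃ K : ℝ, R*(M+1) ≤ K ∧ R*M ≤ K :=
    ⟨R*(M+1), le_refl _, by nlinarith⟩
  obtain ⟨δ0, hδ0, hδ0'⟩ := slutsky_unif_cont f K (ε/16) (by positivity)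
  obtain ⟨δ, hδpos, hδ1, hRδ⟩ : ∃ δ : ℝ, 0 < δ ∧ δ ≤ 1 ∧ R*δ < δ0 := by
    refine ⟨min (δ0/(2*R)) 1, lt_min (by positivity) one_pos, min_le_right _ _, ?_⟩
    have h1 : min (δ0/(2*R)) 1 ≤ δ0/(2*R) := min_le_left _ _
    have h2 : R*(min (δ0/(2*R)) 1) ≤ R*(δ0/(2*R)) := by nlinarith
    have h3 : R*(δ0/(2*R)) < δ0 := by
      have he : R*(δ0/(2*R)) = δ0/2 := by field_simp
      rw [he]; linarith
    linarith
  -- the grid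
  have hcM : ∀ p, -M ≤ c p ∧ c p ≤ M := fun p => abs_le.mp (hM p)
  obtain ⟨t, j, k, hjk, htj⟩ : ∃ (t : ℕ → ℝ) (j : ℕ → ℕ) (k : ℕ), (∀ p, j p ≤ k) ∧
      ∀ p, |c p - t (j p)| < δ ∧ |t (j p)| ≤ M := by
    refine ⟨fun i => -M + i*δ, fun p => ⌊(c p + M)/δ⌋₊, ⌊2*M/δ⌋₊, fun p => ?_, fun p => ?_⟩
    · exact Nat.floor_le_floor ((div_le_div_iff_of_pos_right hδpos).mpr (by linarith [(hcM p).2]))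
    · have h0 : 0 ≤ (c p + M)/δ := div_nonneg (by linarith [(hcM p).1]) hδpos.le
      have hfl : (⌊(c p + M)/δ⌋₊ : ℝ) ≤ (c p + M)/δ := Nat.floor_le h0
      have hfl2 : (c p + M)/δ < (⌊(c p + M)/δ⌋₊ : ℝ) + 1 := Nat.lt_floor_add_one _
      have h1 : (⌊(c p + M)/δ⌋₊ : ℝ) * δ ≤ c p + M := by
        calc (⌊(c p + M)/δ⌋₊:ℝ)*δ ≤ ((c p + M)/δ)*δ := by nlinarith
          _ = c p + M := div_mul_cancel₀ _ hδpos.ne'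
      have h2 : c p + M < ((⌊(c p + M)/δ⌋₊:ℝ) + 1)*δ := by
        calc c p + M = ((c p + M)/δ)*δ := (div_mul_cancel₀ _ hδpos.ne').symm
          _ < ((⌊(c p + M)/δ⌋₊:ℝ)+1)*δ := by nlinarith
      have hjnn : (0:ℝ) ≤ (⌊(c p + M)/δ⌋₊ : ℝ)*δ := by positivity
      constructor
      · rw [abs_lt]; constructor <;> nlinarith
      · rw [abs_le]; constructor <;> nlinarith [(hcM p).1, (hcM p).2]
  -- bounded continuous functions
  obtain ⟨g, hgapp⟩ : ∃ g : ℕ → BoundedContinuousFunction ℝ ℝ, ∀ i x, g i x = f (t i * x) :=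
    ⟨fun i => f.compContinuous ⟨fun x => t i * x, by fun_prop⟩, fun i x => rfl⟩
  obtain ⟨g0, hg0app⟩ : ∃ g0 : BoundedContinuousFunction ℝ ℝ,
      ∀ x, g0 x = min 1 (max (|x| - r) 0) := by
    have hg0cont : Continuous (fun x : ℝ => min 1 (max (|x| - r) 0)) := by fun_prop
    refine ⟨BoundedContinuousFunction.mkOfBound ⟨fun x : ℝ => min 1 (max (|x| - r) 0), hg0cont⟩ 1
      ?_, fun x => rfl⟩
    intro x y
    rw [Real.dist_eq]
    have b1 : (0:ℝ) ≤ min 1 (max (|x| - r) 0) := le_min zero_le_one (le_max_right _ _)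
    have b2 : min 1 (max (|x| - r) 0) ≤ 1 := min_le_left _ _
    have b3 : (0:ℝ) ≤ min 1 (max (|y| - r) 0) := le_min zero_le_one (le_max_right _ _)
    have b4 : min 1 (max (|y| - r) 0) ≤ 1 := min_le_left _ _
    rw [abs_le]
    constructor <;> simp only [ContinuousMap.coe_mk] <;> linarith
  -- choose the ranks
  have hN3ex : ∀ i : ℕ, ∃ N, ∀ n ≥ N, ∀ p,
      |(∫ ω, g i (X n p ω)) - ∫ ω, g i (X' p ω)| < ε/16 :=
    fun i => hX (g i) (ε/16) (by positivity)
  choose N3f hN3f using hN3ex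
  obtain ⟨N1, hN1⟩ := hX g0 η hη
  obtain ⟨N2, hN2⟩ := hY δ hδpos η hη
  refine ⟨max (max N1 N2) ((Finset.range (k+1)).sup N3f), fun n hn p => ?_⟩
  have hnN1 : n ≥ N1 := le_trans (le_trans (le_max_left _ _) (le_max_left _ _)) hn
  have hnN2 : n ≥ N2 := le_trans (le_trans (le_max_right _ _) (le_max_left _ _)) hn
  have hnN3 : n ≥ N3f (j p) :=
    le_trans (le_trans (Finset.le_sup (Finset.mem_range.mpr (Nat.lt_succ_of_le (hjk p))))
      (le_max_right _ _)) hn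
  have hXn : Measurable (X n p) := hXmeas n p
  have hYn : Measurable (Y n p) := hYmeas n p
  have hX'p : Measurable (X' p) := hX'meas p
  have hA1m : MeasurableSet {ω | R ≤ |X n p ω|} := measurableSet_le measurable_const hXn.abs
  have hA2m : MeasurableSet {ω | δ < |Y n p ω - c p|} :=
    measurableSet_lt measurable_const (hYn.sub measurable_const).abs
  have hA3m : MeasurableSet {ω | R ≤ |X' p ω|} := measurableSet_le measurable_const hX'p.abs
  -- probability bounds
  have hPA3 : (ℙ {ω | R ≤ |X' p ω|}).toReal < η := by
    refine lt_of_le_of_lt ?_ (hr p)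
    refine ENNReal.toReal_mono (measure_ne_top _ _) (measure_mono ?_)
    intro ω hω
    have h : R ≤ |X' p ω| := hω
    simp only [Set.mem_setOf_eq]
    linarith
  have hPA2 : (ℙ {ω | δ < |Y n p ω - c p|}).toReal < η := hN2 n hnN2 p
  have hintg0Xn : Integrable (fun ω => g0 (X n p ω)) ℙ :=
    slutsky_bdd_integrable _ (g0.continuous.measurable.comp hXn) ‖g0‖
      (fun ω => by rw [← Real.norm_eq_abs]; exact g0.norm_coe_le_norm _)
  have hintg0X' : Integrable (fun ω => g0 (X' p ω)) ℙ :=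
    slutsky_bdd_integrable _ (g0.continuous.measurable.comp hX'p) ‖g0‖
      (fun ω => by rw [← Real.norm_eq_abs]; exact g0.norm_coe_le_norm _)
  have hPA1 : (ℙ {ω | R ≤ |X n p ω|}).toReal < 2*η := by
    have h1 : (ℙ {ω | R ≤ |X n p ω|}).toReal ≤ ∫ ω, g0 (X n p ω) := by
      refine slutsky_meas_le_integral _ hA1m _ hintg0Xn (fun ω => ?_)
      by_cases hω : ω ∈ {ω | R ≤ |X n p ω|}
      · rw [Set.indicator_of_mem hω, hg0app]
        have hR' : R ≤ |X n p ω| := hω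
        exact le_min le_rfl (le_trans (by linarith) (le_max_left _ _))
      · rw [Set.indicator_of_notMem hω, hg0app]
        exact le_min zero_le_one (le_max_right _ _)
    have h2 : ∫ ω, g0 (X' p ω) ≤ (ℙ {ω | r < |X' p ω|}).toReal := by
      refine slutsky_integral_le_meas _ (measurableSet_lt measurable_const hX'p.abs) _
        hintg0X' (fun ω => ?_)
      by_cases hω : ω ∈ {ω | r < |X' p ω|}
      · rw [Set.indicator_of_mem hω, hg0app]
        exact min_le_left _ _
      · rw [Set.indicator_of_notMem hω, hg0app]
        have h : |X' p ω| ≤ r := not_lt.mp hω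
        rw [max_eq_right (by linarith)]
        exact min_le_right _ _
    have h3 := hN1 n hnN1 p
    have h4 := hr p
    rw [abs_lt] at h3
    linarith [h3.1, h3.2]
  -- the four main estimates
  have hT1 : |(∫ ω, f (X n p ω * Y n p ω)) - ∫ ω, f (c p * X n p ω)| ≤
      ε/16 + 2*C*(ℙ ({ω | R ≤ |X n p ω|} ∪ {ω | δ < |Y n p ω - c p|})).toReal := by
    refine slutsky_main_est _ _ (f.continuous.measurable.comp (hXn.mul hYn))
      (f.continuous.measurable.comp (measurable_const.mul hXn)) C
      (fun ω => hfb _) (fun ω => hfb _) _ (hA1m.union hA2m) _ (by positivity) ?_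
    intro ω hω
    simp only [Pi.mul_apply, Function.comp_apply]
    simp only [Set.mem_union, Set.mem_setOf_eq, not_or, not_le, not_lt] at hω
    obtain ⟨haX, haY⟩ := hω
    have hYb : |Y n p ω| ≤ M + 1 := by
      have h5 := abs_sub_abs_le_abs_sub (Y n p ω) (c p)
      have h6 := hM p
      linarith
    refine le_of_lt (hδ0' _ ?_ _ ?_ ?_)
    · rw [Set.mem_Icc, ← abs_le, abs_mul]
      nlinarith [abs_nonneg (X n p ω), abs_nonneg (Y n p ω)]
    · rw [Set.mem_Icc, ← abs_le, abs_mul]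
      nlinarith [abs_nonneg (X n p ω), hM p, abs_nonneg (c p)]
    · have heq : X n p ω * Y n p ω - c p * X n p ω = X n p ω * (Y n p ω - c p) := by ring
      rw [heq, abs_mul]
      nlinarith [abs_nonneg (X n p ω), abs_nonneg (Y n p ω - c p)]
  have hT2 : |(∫ ω, f (c p * X n p ω)) - ∫ ω, f (t (j p) * X n p ω)| ≤
      ε/16 + 2*C*(ℙ {ω | R ≤ |X n p ω|}).toReal := by
    refine slutsky_main_est _ _ (f.continuous.measurable.comp (measurable_const.mul hXn))
      (f.continuous.measurable.comp (measurable_const.mul hXn)) C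
      (fun ω => hfb _) (fun ω => hfb _) _ hA1m _ (by positivity) ?_
    intro ω hω
    simp only [Pi.mul_apply, Function.comp_apply]
    simp only [Set.mem_setOf_eq, not_le] at hω
    obtain ⟨htc, htb⟩ := htj p
    refine le_of_lt (hδ0' _ ?_ _ ?_ ?_)
    · rw [Set.mem_Icc, ← abs_le, abs_mul]
      nlinarith [abs_nonneg (X n p ω), hM p, abs_nonneg (c p)]
    · rw [Set.mem_Icc, ← abs_le, abs_mul]
      nlinarith [abs_nonneg (X n p ω), abs_nonneg (t (j p))]
    · have heq : c p * X n p ω - t (j p) * X n p ω = (c p - t (j p)) * X n p ω := by ring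
      rw [heq, abs_mul]
      nlinarith [abs_nonneg (X n p ω), abs_nonneg (c p - t (j p))]
  have hT3 : |(∫ ω, f (t (j p) * X n p ω)) - ∫ ω, f (t (j p) * X' p ω)| < ε/16 := by
    have h := hN3f (j p) n hnN3 p
    simpa only [hgapp] using h
  have hT4 : |(∫ ω, f (t (j p) * X' p ω)) - ∫ ω, f (c p * X' p ω)| ≤
      ε/16 + 2*C*(ℙ {ω | R ≤ |X' p ω|}).toReal := by
    refine slutsky_main_est _ _ (f.continuous.measurable.comp (measurable_const.mul hX'p))
      (f.continuous.measurable.comp (measurable_const.mul hX'p)) C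
      (fun ω => hfb _) (fun ω => hfb _) _ hA3m _ (by positivity) ?_
    intro ω hω
    simp only [Pi.mul_apply, Function.comp_apply]
    simp only [Set.mem_setOf_eq, not_le] at hω
    obtain ⟨htc, htb⟩ := htj p
    refine le_of_lt (hδ0' _ ?_ _ ?_ ?_)
    · rw [Set.mem_Icc, ← abs_le, abs_mul]
      nlinarith [abs_nonneg (X' p ω), abs_nonneg (t (j p))]
    · rw [Set.mem_Icc, ← abs_le, abs_mul]
      nlinarith [abs_nonneg (X' p ω), hM p, abs_nonneg (c p)]
    · have heq : t (j p) * X' p ω - c p * X' p ω = (t (j p) - c p) * X' p ω := by ring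
      rw [heq, abs_mul, abs_sub_comm]
      nlinarith [abs_nonneg (X' p ω), abs_nonneg (c p - t (j p))]
  -- combine
  have hPU : (ℙ ({ω | R ≤ |X n p ω|} ∪ {ω | δ < |Y n p ω - c p|})).toReal ≤
      (ℙ {ω | R ≤ |X n p ω|}).toReal + (ℙ {ω | δ < |Y n p ω - c p|}).toReal := by
    rw [← ENNReal.toReal_add (measure_ne_top _ _) (measure_ne_top _ _)]
    exact ENNReal.toReal_mono
      (ENNReal.add_ne_top.mpr ⟨measure_ne_top _ _, measure_ne_top _ _⟩) (measure_union_le _ _)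
  have e1 : 2*C*(ℙ ({ω | R ≤ |X n p ω|} ∪ {ω | δ < |Y n p ω - c p|})).toReal ≤ 2*C*(3*η) := by
    nlinarith [ENNReal.toReal_nonneg (a := ℙ ({ω | R ≤ |X n p ω|} ∪ {ω | δ < |Y n p ω - c p|}))]
  have e2 : 2*C*(ℙ {ω | R ≤ |X n p ω|}).toReal ≤ 2*C*(2*η) := by
    nlinarith [ENNReal.toReal_nonneg (a := ℙ {ω | R ≤ |X n p ω|})]
  have e3 : 2*C*(ℙ {ω | R ≤ |X' p ω|}).toReal ≤ 2*C*η := by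
    nlinarith [ENNReal.toReal_nonneg (a := ℙ {ω | R ≤ |X' p ω|})]
  have e4 : C*η ≤ ε/64 := by nlinarith
  have tri1 := abs_sub_le (∫ ω, f (X n p ω * Y n p ω)) (∫ ω, f (c p * X n p ω))
    (∫ ω, f (c p * X' p ω))
  have tri2 := abs_sub_le (∫ ω, f (c p * X n p ω)) (∫ ω, f (t (j p) * X n p ω))
    (∫ ω, f (c p * X' p ω))
  have tri3 := abs_sub_le (∫ ω, f (t (j p) * X n p ω)) (∫ ω, f (t (j p) * X' p ω))
    (∫ ω, f (c p * X' p ω))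
  linarith
end

section
/- Let {F_{n,p}}_{n,p∈ℕ} be a family of distribution functions on ℝ, and let {F_p}_{p∈ℕ} and F be continuous distribution functions on ℝ such that F_p converges weakly to F as p → ∞. Then (i) {F_p}_{p∈ℕ} satisfies assumptions (A1) and (A2); and (ii) if F_{n,p} ⇒ F_p uniformly-over-p, then lim_{n→∞} sup_{p∈ℕ} sup_{x∈ℝ} |F_{n,p}(x) − F_p(x)| = 0. -/
open MeasureTheory Filter Set Topology

/-- Distribution function of a measure on `ℝ`. -/
noncomputable def cdfR (μ : Measure ℝ) (x : ℝ) : ℝ := (μ (Iic x)).toReal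

lemma cdfR_eq_cdf (μ : Measure ℝ) [IsProbabilityMeasure μ] :
    cdfR μ = ProbabilityTheory.cdf μ := by
  ext x; rw [ProbabilityTheory.cdf_eq_real]; rfl

lemma cdfR_nonneg (μ : Measure ℝ) [IsProbabilityMeasure μ] (x : ℝ) : 0 ≤ cdfR μ x :=
  ENNReal.toReal_nonneg

lemma cdfR_le_one (μ : Measure ℝ) [IsProbabilityMeasure μ] (x : ℝ) : cdfR μ x ≤ 1 := by
  rw [cdfR_eq_cdf]; exact ProbabilityTheory.cdf_le_one μ x

lemma cdfR_mono (μ : Measure ℝ) [IsProbabilityMeasure μ] : Monotone (cdfR μ) := by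
  rw [cdfR_eq_cdf]; exact ProbabilityTheory.monotone_cdf μ

lemma cdfR_tendsto_atBot (μ : Measure ℝ) [IsProbabilityMeasure μ] :
    Tendsto (cdfR μ) atBot (𝓝 0) := by
  rw [cdfR_eq_cdf]; exact ProbabilityTheory.tendsto_cdf_atBot μ

lemma cdfR_tendsto_atTop (μ : Measure ℝ) [IsProbabilityMeasure μ] :
    Tendsto (cdfR μ) atTop (𝓝 1) := by
  rw [cdfR_eq_cdf]; exact ProbabilityTheory.tendsto_cdf_atTop μ

/-- A continuous piecewise-linear bump: `1` on `Iic a`, `0` on `Ici b`. -/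
noncomputable def stepFn (a b : ℝ) : BoundedContinuousFunction ℝ ℝ :=
  BoundedContinuousFunction.mkOfBound
    ⟨fun x => max 0 (min 1 ((b - x) * (b - a)⁻¹)), by fun_prop⟩ 1
    (by
      intro x y
      have h1 : ∀ z : ℝ, 0 ≤ max 0 (min 1 ((b - z) * (b - a)⁻¹)) := fun z => le_max_left _ _
      have h2 : ∀ z : ℝ, max 0 (min 1 ((b - z) * (b - a)⁻¹)) ≤ 1 := fun z =>
        max_le zero_le_one (min_le_left _ _)
      simp only [ContinuousMap.coe_mk, Real.dist_eq, abs_sub_le_iff]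
      constructor <;> nlinarith [h1 x, h1 y, h2 x, h2 y])

lemma stepFn_nonneg (a b x : ℝ) : 0 ≤ stepFn a b x := le_max_left _ _

lemma stepFn_le_one (a b x : ℝ) : stepFn a b x ≤ 1 :=
  max_le zero_le_one (min_le_left _ _)

lemma stepFn_of_le (a b x : ℝ) (hab : a < b) (hx : x ≤ a) : stepFn a b x = 1 := by
  have h : (1 : ℝ) ≤ (b - x) * (b - a)⁻¹ := by
    rw [← div_eq_mul_inv, le_div_iff₀ (by linarith)]
    linarith
  show max 0 (min 1 ((b - x) * (b - a)⁻¹)) = 1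
  rw [min_eq_left h]; simp

lemma stepFn_of_ge (a b x : ℝ) (hab : a < b) (hx : b ≤ x) : stepFn a b x = 0 := by
  have h : (b - x) * (b - a)⁻¹ ≤ 0 := by
    apply mul_nonpos_of_nonpos_of_nonneg
    · linarith
    · rw [inv_nonneg]; linarith
  show max 0 (min 1 ((b - x) * (b - a)⁻¹)) = 0
  rw [max_eq_left]; exact le_trans (min_le_right _ _) h

lemma integral_stepFn_bounds (ρ : Measure ℝ) [IsProbabilityMeasure ρ] (a b : ℝ) (hab : a < b) :
    cdfR ρ a ≤ ∫ x, stepFn a b x ∂ρ ∧ ∫ x, stepFn a b x ∂ρ ≤ cdfR ρ b := by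
  have hint : Integrable (fun x => stepFn a b x) ρ := (stepFn a b).integrable ρ
  have hia : Integrable (Set.indicator (Iic a) fun _ => (1:ℝ)) ρ :=
    (integrable_const (1:ℝ)).indicator measurableSet_Iic
  have hib : Integrable (Set.indicator (Iic b) fun _ => (1:ℝ)) ρ :=
    (integrable_const (1:ℝ)).indicator measurableSet_Iic
  constructor
  · have : cdfR ρ a = ∫ x, Set.indicator (Iic a) (fun _ => (1:ℝ)) x ∂ρ := by
      rw [integral_indicator_const (1:ℝ) measurableSet_Iic]; simp [cdfR, measureReal_def]
    rw [this]
    apply integral_mono hia hint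
    intro x
    by_cases hx : x ≤ a
    · simp [Set.indicator_of_mem, hx, stepFn_of_le a b x hab hx]
    · simp only [Set.indicator_of_notMem (by simpa using hx : x ∉ Iic a)]
      exact stepFn_nonneg a b x
  · have : cdfR ρ b = ∫ x, Set.indicator (Iic b) (fun _ => (1:ℝ)) x ∂ρ := by
      rw [integral_indicator_const (1:ℝ) measurableSet_Iic]; simp [cdfR, measureReal_def]
    rw [this]
    apply integral_mono hint hib
    intro x
    by_cases hx : x ≤ b
    · simp only [Set.indicator_of_mem (by simpa using hx : x ∈ Iic b)]
      exact stepFn_le_one a b x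
    · simp only [Set.indicator_of_notMem (by simpa using hx : x ∉ Iic b)]
      rw [stepFn_of_ge a b x hab (le_of_not_ge hx)]
/-- Existence of a finite grid on which a continuous cdf has small increments and small tails. -/
lemma grid_exists (ν : Measure ℝ) [IsProbabilityMeasure ν] (hc : Continuous (cdfR ν))
    {ε : ℝ} (hε : 0 < ε) :
    ∃ (k : ℕ) (t : ℕ → ℝ), 0 < k ∧ (∀ i < k, t i < t (i + 1)) ∧
      cdfR ν (t 0) < ε ∧ 1 - cdfR ν (t k) < ε ∧
      ∀ i < k, cdfR ν (t (i + 1)) - cdfR ν (t i) < ε := by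
  obtain ⟨a, ha⟩ : ∃ a, cdfR ν a < ε :=
    ((cdfR_tendsto_atBot ν).eventually (eventually_lt_nhds hε)).exists
  obtain ⟨b₀, hb₀⟩ : ∃ b, 1 - cdfR ν b < ε := by
    have h : Tendsto (fun x => 1 - cdfR ν x) atTop (𝓝 (1 - 1)) :=
      tendsto_const_nhds.sub (cdfR_tendsto_atTop ν)
    rw [sub_self] at h
    exact (h.eventually (eventually_lt_nhds hε)).exists
  obtain ⟨b, hab, hb⟩ : ∃ b, a < b ∧ 1 - cdfR ν b < ε := by
    refine ⟨max b₀ (a + 1), lt_of_lt_of_le (by linarith) (le_max_right _ _), ?_⟩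
    exact lt_of_le_of_lt (by linarith [cdfR_mono ν (le_max_left b₀ (a + 1))]) hb₀
  have hucont : UniformContinuousOn (cdfR ν) (Icc a b) :=
    (isCompact_Icc).uniformContinuousOn_of_continuous (hc.continuousOn)
  rw [Metric.uniformContinuousOn_iff] at hucont
  obtain ⟨δ, hδ, hδ'⟩ := hucont ε hε
  obtain ⟨k, hk, hkδ⟩ : ∃ k : ℕ, 0 < k ∧ (b - a) / k < δ := by
    refine ⟨⌈(b - a) / δ⌉₊ + 1, Nat.succ_pos _, ?_⟩
    have hkc : (b - a) / δ < ((⌈(b - a) / δ⌉₊ + 1 : ℕ) : ℝ) := by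
      push_cast
      exact lt_of_le_of_lt (Nat.le_ceil _) (by linarith)
    have hkpos : (0:ℝ) < ((⌈(b - a) / δ⌉₊ + 1 : ℕ) : ℝ) := by positivity
    rw [div_lt_iff₀ hkpos] at *
    rw [div_lt_iff₀ hδ] at hkc
    linarith [mul_comm δ ((⌈(b - a) / δ⌉₊ + 1 : ℕ) : ℝ)]
  have hkR : (0:ℝ) < (k:ℝ) := by exact_mod_cast hk
  have hstep : 0 < (b - a) / k := div_pos (by linarith) hkR
  set s : ℝ := (b - a) / k with hs
  have hks : (k : ℝ) * s = b - a := by rw [hs]; field_simp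
  have hib : ∀ j : ℕ, j ≤ k → a + (j : ℝ) * s ∈ Icc a b := by
    intro j hj
    have hjk : (j : ℝ) ≤ (k : ℝ) := by exact_mod_cast hj
    constructor
    · nlinarith [Nat.cast_nonneg (α := ℝ) j]
    · nlinarith
  refine ⟨k, fun i => a + i * s, hk, ?_, ?_, ?_, ?_⟩
  · intro i _
    show a + (i:ℝ) * s < a + ((i+1:ℕ):ℝ) * s
    push_cast; nlinarith
  · simpa using ha
  · show 1 - cdfR ν (a + (k:ℝ) * s) < ε
    rw [hks]
    simpa using hb
  · intro i hi
    show cdfR ν (a + ((i+1:ℕ):ℝ) * s) - cdfR ν (a + (i:ℝ) * s) < ε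
    have h1 := hib (i + 1) (by omega)
    have h2 := hib i (by omega)
    have hd := hδ' _ h1 _ h2 (by
      rw [Real.dist_eq]
      have : a + ((i+1:ℕ):ℝ) * s - (a + (i:ℝ) * s) = s := by push_cast; ring
      rw [this, abs_of_nonneg (le_of_lt hstep)]
      exact hkδ)
    rw [Real.dist_eq] at hd
    exact lt_of_le_of_lt (le_abs_self _) hd

/-- Core estimate: if the cdf of `ν` has small increments/tails along a grid and the
integrals of the grid test functions against `ρ` and `ν` are close, then the cdfs of
`ρ` and `ν` are uniformly close. -/
lemma core_estimate (ρ ν : Measure ℝ) [IsProbabilityMeasure ρ] [IsProbabilityMeasure ν]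
    {ε : ℝ} (hε : 0 < ε) (k : ℕ) (t : ℕ → ℝ) (hk : 0 < k)
    (hmono : ∀ i < k, t i < t (i + 1))
    (h0 : cdfR ν (t 0) < ε / 4) (h1 : 1 - cdfR ν (t k) < ε / 4)
    (hinc : ∀ i < k, cdfR ν (t (i + 1)) - cdfR ν (t i) < ε / 4)
    (htest : ∀ i < k,
      |(∫ x, stepFn (t i) (t (i + 1)) x ∂ρ) - ∫ x, stepFn (t i) (t (i + 1)) x ∂ν| < ε / 4) :
    ∀ x : ℝ, |cdfR ρ x - cdfR ν x| < ε := by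
  classical
  -- grid-point bounds
  have Fup : ∀ i < k, cdfR ρ (t i) < cdfR ν (t (i + 1)) + ε / 4 := by
    intro i hi
    obtain ⟨hl, hr⟩ := integral_stepFn_bounds ρ (t i) (t (i + 1)) (hmono i hi)
    obtain ⟨hl', hr'⟩ := integral_stepFn_bounds ν (t i) (t (i + 1)) (hmono i hi)
    have := abs_lt.mp (htest i hi)
    linarith [this.2]
  have Flo : ∀ i < k, cdfR ν (t i) - ε / 4 < cdfR ρ (t (i + 1)) := by
    intro i hi
    obtain ⟨hl, hr⟩ := integral_stepFn_bounds ρ (t i) (t (i + 1)) (hmono i hi)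
    obtain ⟨hl', hr'⟩ := integral_stepFn_bounds ν (t i) (t (i + 1)) (hmono i hi)
    have := abs_lt.mp (htest i hi)
    linarith [this.1]
  intro x
  rw [abs_sub_lt_iff]
  by_cases hx0 : x < t 0
  · have hFx : cdfR ρ x ≤ cdfR ρ (t 0) := cdfR_mono ρ (le_of_lt hx0)
    have hGx : cdfR ν x ≤ cdfR ν (t 0) := cdfR_mono ν (le_of_lt hx0)
    have h01 : cdfR ν (t (0 + 1)) - cdfR ν (t 0) < ε / 4 := hinc 0 hk
    have hF0 := Fup 0 hk
    constructor
    · have := cdfR_nonneg ν x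
      linarith
    · have := cdfR_nonneg ρ x
      linarith
  by_cases hxk : t k ≤ x
  · have hFx : cdfR ρ (t k) ≤ cdfR ρ x := cdfR_mono ρ hxk
    have hGx : cdfR ν (t k) ≤ cdfR ν x := cdfR_mono ν hxk
    obtain ⟨j, rfl⟩ : ∃ j, k = j + 1 := ⟨k - 1, by omega⟩
    have hFk := Flo j (by omega)
    have hjk : cdfR ν (t (j + 1)) - cdfR ν (t j) < ε / 4 := hinc j (by omega)
    constructor
    · have := cdfR_le_one ρ x
      linarith
    · have := cdfR_le_one ν x
      linarith
  -- middle case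
  push_neg at hx0 hxk
  set m := Nat.findGreatest (fun i => t i ≤ x) k with hm
  have hmk : m ≤ k := Nat.findGreatest_le k
  have htm : t m ≤ x := Nat.findGreatest_spec (P := fun i => t i ≤ x) (Nat.zero_le k) hx0
  have hmlt : m < k := by
    rcases lt_or_eq_of_le hmk with h | h
    · exact h
    · exfalso; rw [h] at htm; linarith
  have hxm1 : x < t (m + 1) := by
    by_contra h
    push_neg at h
    exact Nat.findGreatest_is_greatest (P := fun i => t i ≤ x) (Nat.lt_succ_self m) (by omega) h
  have hGle : cdfR ν x ≤ cdfR ν (t (m + 1)) := cdfR_mono ν (le_of_lt hxm1)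
  have hGge : cdfR ν (t m) ≤ cdfR ν x := cdfR_mono ν htm
  have hFle : cdfR ρ x ≤ cdfR ρ (t (m + 1)) := cdfR_mono ρ (le_of_lt hxm1)
  have hFge : cdfR ρ (t m) ≤ cdfR ρ x := cdfR_mono ρ htm
  have hincm : cdfR ν (t (m + 1)) - cdfR ν (t m) < ε / 4 := hinc m hmlt
  constructor
  · -- F x - G x < ε
    rcases lt_or_eq_of_le (Nat.succ_le_of_lt hmlt) with h | h
    · have := Fup (m + 1) h
      have := hinc (m + 1) h
      linarith
    · have := cdfR_le_one ρ x
      rw [← h] at h1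
      linarith
  · -- G x - F x < ε
    rcases Nat.eq_zero_or_pos m with h | h
    · have := cdfR_nonneg ρ x
      rw [h] at hincm hGle
      linarith
    · obtain ⟨j, hj⟩ : ∃ j, m = j + 1 := ⟨m - 1, by omega⟩
      have hFj := Flo j (by omega)
      have hjinc := hinc j (by omega)
      rw [hj] at hFge hincm hGle
      linarith

lemma uniform_tail (ν : ℕ → Measure ℝ) (νlim : Measure ℝ)
    [∀ p, IsProbabilityMeasure (ν p)] [IsProbabilityMeasure νlim]
    (hweak : ∀ x, Tendsto (fun p => cdfR (ν p) x) atTop (𝓝 (cdfR νlim x)))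
    {ε : ℝ} (hε : 0 < ε) :
    ∃ r : ℝ, ∀ p, cdfR (ν p) (-r) < ε ∧ 1 - cdfR (ν p) r < ε := by
  obtain ⟨a, ha⟩ : ∃ a, cdfR νlim a < ε / 2 :=
    ((cdfR_tendsto_atBot νlim).eventually (eventually_lt_nhds (by linarith))).exists
  obtain ⟨b, hb⟩ : ∃ b, 1 - cdfR νlim b < ε / 2 := by
    have h : Tendsto (fun x => 1 - cdfR νlim x) atTop (𝓝 (1 - 1)) :=
      tendsto_const_nhds.sub (cdfR_tendsto_atTop νlim)
    rw [sub_self] at h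
    exact (h.eventually (eventually_lt_nhds (by linarith))).exists
  obtain ⟨P1, hP1⟩ := (Metric.tendsto_atTop.mp (hweak a)) (ε / 2) (by linarith)
  obtain ⟨P2, hP2⟩ := (Metric.tendsto_atTop.mp (hweak b)) (ε / 2) (by linarith)
  set P := max P1 P2 with hP
  have hA : ∀ p, ∃ c, cdfR (ν p) c < ε := fun p =>
    ((cdfR_tendsto_atBot (ν p)).eventually (eventually_lt_nhds hε)).exists
  have hB : ∀ p, ∃ c, 1 - cdfR (ν p) c < ε := by
    intro p
    have h : Tendsto (fun x => 1 - cdfR (ν p) x) atTop (𝓝 (1 - 1)) :=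
      tendsto_const_nhds.sub (cdfR_tendsto_atTop (ν p))
    rw [sub_self] at h
    exact (h.eventually (eventually_lt_nhds hε)).exists
  choose A hA' using hA
  choose B hB' using hB
  set r : ℝ := 1 + max (max (-a) b)
      ((Finset.range (P + 1)).sup' (by simp) (fun p => max (-(A p)) (B p))) with hr
  have hr1 : -r ≤ a := by
    have := le_max_left (-a) b
    have := le_max_left (max (-a) b)
        ((Finset.range (P + 1)).sup' (by simp) (fun p => max (-(A p)) (B p)))
    rw [hr]; linarith
  have hr2 : b ≤ r := by
    have := le_max_right (-a) b
    have := le_max_left (max (-a) b)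
        ((Finset.range (P + 1)).sup' (by simp) (fun p => max (-(A p)) (B p)))
    rw [hr]; linarith
  have hrp : ∀ p ≤ P, -r ≤ A p ∧ B p ≤ r := by
    intro p hp
    have hmem : p ∈ Finset.range (P + 1) := Finset.mem_range.mpr (by omega)
    have h1 : max (-(A p)) (B p) ≤
        (Finset.range (P + 1)).sup' (by simp) (fun p => max (-(A p)) (B p)) :=
      Finset.le_sup' (fun p => max (-(A p)) (B p)) hmem
    have := le_max_right (max (-a) b)
        ((Finset.range (P + 1)).sup' (by simp) (fun p => max (-(A p)) (B p)))
    constructor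
    · have := le_max_left (-(A p)) (B p); rw [hr]; linarith
    · have := le_max_right (-(A p)) (B p); rw [hr]; linarith
  refine ⟨r, fun p => ?_⟩
  rcases le_or_gt p P with hp | hp
  · obtain ⟨h1, h2⟩ := hrp p hp
    exact ⟨lt_of_le_of_lt (cdfR_mono (ν p) h1) (hA' p),
      lt_of_le_of_lt (by linarith [cdfR_mono (ν p) h2]) (hB' p)⟩
  · have hp1 : p ≥ P1 := le_trans (le_max_left _ _) (le_of_lt hp)
    have hp2 : p ≥ P2 := le_trans (le_max_right _ _) (le_of_lt hp)
    have d1 := hP1 p hp1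
    have d2 := hP2 p hp2
    rw [Real.dist_eq, abs_sub_lt_iff] at d1 d2
    constructor
    · have := cdfR_mono (ν p) hr1
      linarith [d1.1]
    · have := cdfR_mono (ν p) hr2
      linarith [d2.2]

lemma equi_all (ν : ℕ → Measure ℝ) (νlim : Measure ℝ)
    [∀ p, IsProbabilityMeasure (ν p)] [IsProbabilityMeasure νlim]
    (hcont : ∀ p, Continuous (cdfR (ν p))) (hcontlim : Continuous (cdfR νlim))
    (hweak : ∀ x, Tendsto (fun p => cdfR (ν p) x) atTop (𝓝 (cdfR νlim x)))
    (x : ℝ) : EquiContAt (fun p => cdfR (ν p)) x := by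
  intro ε hε
  obtain ⟨θ, hθ, hθ'⟩ := Metric.continuousAt_iff.mp (hcontlim.continuousAt (x := x)) (ε / 4)
    (by linarith)
  set a := x - θ / 2 with hadef
  set b := x + θ / 2 with hbdef
  have hda : dist a x < θ := by rw [Real.dist_eq, hadef]; rw [abs_of_nonpos] <;> [skip; linarith]; linarith
  have hdb : dist b x < θ := by rw [Real.dist_eq, hbdef]; rw [abs_of_nonneg] <;> [skip; linarith]; linarith
  have hga := hθ' hda
  have hgb := hθ' hdb
  rw [Real.dist_eq, abs_sub_lt_iff] at hga hgb
  obtain ⟨P1, hP1⟩ := (Metric.tendsto_atTop.mp (hweak a)) (ε / 8) (by linarith)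
  obtain ⟨P2, hP2⟩ := (Metric.tendsto_atTop.mp (hweak b)) (ε / 8) (by linarith)
  set P := max P1 P2 with hP
  have hsmall : ∀ p, ∃ δ > (0:ℝ), ∀ y, |y - x| < δ → |cdfR (ν p) y - cdfR (ν p) x| < ε := by
    intro p
    obtain ⟨δ, hδ, hδ'⟩ := Metric.continuousAt_iff.mp ((hcont p).continuousAt (x := x)) ε hε
    exact ⟨δ, hδ, fun y hy => by
      have := hδ' (show dist y x < δ by rwa [Real.dist_eq])
      rwa [Real.dist_eq] at this⟩
  choose D hD hD' using hsmall
  set δ : ℝ := min (θ / 2) ((Finset.range (P + 1)).inf' (by simp) D) with hδdef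
  have hδpos : 0 < δ := by
    rw [hδdef, lt_min_iff]
    refine ⟨by linarith, ?_⟩
    rw [Finset.lt_inf'_iff]
    exact fun p _ => hD p
  refine ⟨δ, hδpos, fun p y hy => ?_⟩
  rcases le_or_gt p P with hp | hp
  · have hmem : p ∈ Finset.range (P + 1) := Finset.mem_range.mpr (by omega)
    have : δ ≤ D p := le_trans (min_le_right _ _) (Finset.inf'_le _ hmem)
    exact hD' p y (lt_of_lt_of_le hy this)
  · have hyθ : |y - x| < θ / 2 := lt_of_lt_of_le hy (min_le_left _ _)
    have hya : a ≤ y := by rw [hadef]; rcases abs_lt.mp hyθ with ⟨h1, _⟩; linarith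
    have hyb : y ≤ b := by rw [hbdef]; rcases abs_lt.mp hyθ with ⟨_, h2⟩; linarith
    have hxa : a ≤ x := by rw [hadef]; linarith
    have hxb : x ≤ b := by rw [hbdef]; linarith
    have h1 : cdfR (ν p) a ≤ cdfR (ν p) y := cdfR_mono _ hya
    have h2 : cdfR (ν p) y ≤ cdfR (ν p) b := cdfR_mono _ hyb
    have h3 : cdfR (ν p) a ≤ cdfR (ν p) x := cdfR_mono _ hxa
    have h4 : cdfR (ν p) x ≤ cdfR (ν p) b := cdfR_mono _ hxb
    have hp1 : p ≥ P1 := le_trans (le_max_left _ _) (le_of_lt hp)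
    have hp2 : p ≥ P2 := le_trans (le_max_right _ _) (le_of_lt hp)
    have d1 := hP1 p hp1
    have d2 := hP2 p hp2
    rw [Real.dist_eq, abs_sub_lt_iff] at d1 d2
    have hlen : cdfR (ν p) b - cdfR (ν p) a < ε := by linarith [hga.1, hga.2, hgb.1, hgb.2, d1.1, d1.2, d2.1, d2.2]
    rw [abs_sub_lt_iff]
    constructor <;> linarith


/-- If the continuous distribution functions `F p` of the probability measures `ν p`
converge pointwise (hence weakly) to a continuous distribution function `F` as
`p → ∞`, then (i) the family `{F p}` is tight (A1) and every point is an
equi-continuity point up to a countable set (A2); and (ii) if moreover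
`μ n p ⟹ ν p` uniformly-over-`p`, then
`sup_p sup_x |F_{n,p}(x) − F_p(x)| → 0` as `n → ∞`. -/
theorem uniform_over_p_cdf_convergence
    (μ : ℕ → ℕ → Measure ℝ) (ν : ℕ → Measure ℝ) (νlim : Measure ℝ)
    [∀ n p, IsProbabilityMeasure (μ n p)] [∀ p, IsProbabilityMeasure (ν p)]
    [IsProbabilityMeasure νlim]
    (hcont : ∀ p, Continuous (cdfR (ν p))) (hcontlim : Continuous (cdfR νlim))
    (hweak : ∀ x, Tendsto (fun p => cdfR (ν p) x) atTop (𝓝 (cdfR νlim x))) :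
    -- (i) (A1) and (A2) hold for the family {F_p}
    ((∀ ε > (0 : ℝ), ∃ r : ℝ, ∀ p : ℕ, ((ν p) {x | r < |x|}).toReal < ε) ∧
      Set.Countable {x | ¬ EquiContAt (fun p => cdfR (ν p)) x}) ∧
    -- (ii) uniform-over-p convergence in distribution upgrades to
    -- uniform (over p and x) convergence of the distribution functions
    ((∀ f : BoundedContinuousFunction ℝ ℝ, ∀ ε > (0 : ℝ), ∃ N : ℕ, ∀ n ≥ N, ∀ p : ℕ,
        |(∫ x, f x ∂(μ n p)) - ∫ x, f x ∂(ν p)| < ε) →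
      ∀ ε > (0 : ℝ), ∃ N : ℕ, ∀ n ≥ N, ∀ p : ℕ, ∀ x : ℝ,
        |cdfR (μ n p) x - cdfR (ν p) x| < ε) := by
  refine ⟨⟨?_, ?_⟩, ?_⟩
  · -- (A1) tightness
    intro ε hε
    obtain ⟨r, hr⟩ := uniform_tail ν νlim hweak (show (0:ℝ) < ε / 2 by linarith)
    refine ⟨r, fun p => ?_⟩
    have hsub : {x : ℝ | r < |x|} ⊆ Iic (-r) ∪ (Iic r)ᶜ := by
      intro x hx
      simp only [mem_setOf_eq] at hx
      rcases lt_or_ge x 0 with h | h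
      · left
        simp only [mem_Iic]
        have : r < -x := by rwa [abs_of_neg h] at hx
        linarith
      · right
        simp only [mem_union, mem_compl_iff, mem_Iic, not_le]
        rwa [abs_of_nonneg h] at hx
    have h1 : ν p {x | r < |x|} ≤ ν p (Iic (-r)) + ν p ((Iic r)ᶜ) :=
      (measure_mono hsub).trans (measure_union_le _ _)
    have h2 := ENNReal.toReal_mono
      (by exact ENNReal.add_ne_top.mpr ⟨measure_ne_top _ _, measure_ne_top _ _⟩) h1
    rw [ENNReal.toReal_add (measure_ne_top _ _) (measure_ne_top _ _)] at h2
    have h3 : (ν p ((Iic r)ᶜ)).toReal = 1 - cdfR (ν p) r := by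
      rw [measure_compl measurableSet_Iic (measure_ne_top _ _), measure_univ,
        ENNReal.toReal_sub_of_le prob_le_one (by simp)]
      simp [cdfR]
    rw [h3] at h2
    obtain ⟨ha, hb⟩ := hr p
    calc (ν p {x | r < |x|}).toReal ≤ cdfR (ν p) (-r) + (1 - cdfR (ν p) r) := h2
    _ < ε / 2 + ε / 2 := by linarith
    _ = ε := by ring
  · -- (A2): every point is an equi-continuity point
    have : {x | ¬ EquiContAt (fun p => cdfR (ν p)) x} = ∅ := by
      rw [Set.eq_empty_iff_forall_notMem]
      intro x hx
      exact hx (equi_all ν νlim hcont hcontlim hweak x)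
    rw [this]
    exact Set.countable_empty
  · -- (ii)
    intro H ε hε
    -- global grid for νlim with ε/12
    obtain ⟨k, t, hk, hmono, h0, h1, hinc⟩ :=
      grid_exists νlim hcontlim (show (0:ℝ) < ε / 12 by linarith)
    -- convergence at grid points
    have hpt : ∀ i : ℕ, ∃ P : ℕ, ∀ p ≥ P, |cdfR (ν p) (t i) - cdfR νlim (t i)| < ε / 12 := by
      intro i
      obtain ⟨P, hP⟩ := (Metric.tendsto_atTop.mp (hweak (t i))) (ε / 12) (by linarith)
      exact ⟨P, fun p hp => by have := hP p hp; rwa [Real.dist_eq] at this⟩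
    choose Ppt hPpt using hpt
    set P : ℕ := (Finset.range (k + 1)).sup Ppt with hPdef
    -- per-p grids with ε/4
    have hgp : ∀ p : ℕ, ∃ (k' : ℕ) (t' : ℕ → ℝ), 0 < k' ∧ (∀ i < k', t' i < t' (i + 1)) ∧
        cdfR (ν p) (t' 0) < ε / 4 ∧ 1 - cdfR (ν p) (t' k') < ε / 4 ∧
        ∀ i < k', cdfR (ν p) (t' (i + 1)) - cdfR (ν p) (t' i) < ε / 4 :=
      fun p => grid_exists (ν p) (hcont p) (by linarith)
    choose k' t' hk' hmono' h0' h1' hinc' using hgp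
    -- N from the hypothesis
    have hN : ∀ f : BoundedContinuousFunction ℝ ℝ, ∃ N : ℕ, ∀ n ≥ N, ∀ p : ℕ,
        |(∫ x, f x ∂(μ n p)) - ∫ x, f x ∂(ν p)| < ε / 4 := fun f => H f (ε / 4) (by linarith)
    choose Nf hNf using hN
    set N1 : ℕ := (Finset.range k).sup (fun i => Nf (stepFn (t i) (t (i + 1)))) with hN1
    set N2 : ℕ := (Finset.range P).sup
      (fun p => (Finset.range (k' p)).sup (fun i => Nf (stepFn (t' p i) (t' p (i + 1))))) with hN2
    refine ⟨max N1 N2, fun n hn p => ?_⟩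
    rcases lt_or_ge p P with hp | hp
    · -- small p : use the per-p grid
      apply core_estimate (μ n p) (ν p) hε (k' p) (t' p) (hk' p) (hmono' p) (h0' p) (h1' p)
        (hinc' p)
      intro i hi
      have hle : Nf (stepFn (t' p i) (t' p (i + 1))) ≤ N2 := by
        calc Nf (stepFn (t' p i) (t' p (i + 1)))
            ≤ (Finset.range (k' p)).sup (fun i => Nf (stepFn (t' p i) (t' p (i + 1)))) :=
              Finset.le_sup (f := fun i => Nf (stepFn (t' p i) (t' p (i + 1))))
                (Finset.mem_range.mpr hi)
        _ ≤ N2 := Finset.le_sup (f := fun p => (Finset.range (k' p)).sup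
              (fun i => Nf (stepFn (t' p i) (t' p (i + 1))))) (Finset.mem_range.mpr hp)
      exact hNf _ n (le_trans (le_trans hle (le_max_right N1 N2)) hn) p
    · -- large p : use the global grid, transferred to ν p
      have hclose : ∀ i ≤ k, |cdfR (ν p) (t i) - cdfR νlim (t i)| < ε / 12 := by
        intro i hi
        refine hPpt i p (le_trans ?_ hp)
        exact Finset.le_sup (Finset.mem_range.mpr (by omega))
      apply core_estimate (μ n p) (ν p) hε k t hk hmono
      · have := abs_sub_lt_iff.mp (hclose 0 (Nat.zero_le k))
        linarith [this.1]
      · have := abs_sub_lt_iff.mp (hclose k le_rfl)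
        linarith [this.2]
      · intro i hi
        have hi1 := abs_sub_lt_iff.mp (hclose (i + 1) (by omega))
        have hi2 := abs_sub_lt_iff.mp (hclose i (by omega))
        have := hinc i hi
        linarith [hi1.1, hi2.2]
      · intro i hi
        have hle : Nf (stepFn (t i) (t (i + 1))) ≤ N1 :=
          Finset.le_sup (f := fun i => Nf (stepFn (t i) (t (i + 1)))) (Finset.mem_range.mpr hi)
        exact hNf _ n (le_trans (le_trans hle (le_max_left N1 N2)) hn) p
end

section
/- Fourth-moment variance bound: Let z = (z_1, …, z_m)ᵀ be a random vector with E[z] = 0, Cov(z) = I_m, E[z_k⁴] = 3 + Δ for every k (Δ a constant), and such that for any positive integer q and distinct indices l_1 ≠ l_2 ≠ … ≠ l_q and non-negative integers α_1, …, α_q with Σ_ℓ α_ℓ ≤ 4, one has E[z_{l_1}^{α_1} ⋯ z_{l_q}^{α_q}] = E[z_{l_1}^{α_1}] ⋯ E[z_{l_q}^{α_q}]. Then for every p × m real matrix A, E[‖Az‖²] = tr(AAᵀ), E[‖Az‖⁴] ≤ (5 + Δ) tr((AᵀA)²) + [tr(AᵀA)]², and consequently Var(‖Az‖²) ≤ (5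 + Δ) tr((AAᵀ)²). -/
open MeasureTheory Filter Matrix
open scoped ProbabilityTheory

private def cnt2 {m : ℕ} (k l j : Fin m) : ℕ :=
  (if k = j then 1 else 0) + (if l = j then 1 else 0)

private def cnt4 {m : ℕ} (k l s t j : Fin m) : ℕ := cnt2 k l j + cnt2 s t j

private lemma sum_cnt2 {m : ℕ} (k l : Fin m) : ∑ j, cnt2 k l j = 2 := by
  simp [cnt2, Finset.sum_add_distrib]

private lemma sum_cnt4 {m : ℕ} (k l s t : Fin m) : ∑ j, cnt4 k l s t j = 4 := by
  simp [cnt4, Finset.sum_add_distrib, sum_cnt2]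

private lemma prod_cnt2 {m : ℕ} (k l : Fin m) (v : Fin m → ℝ) :
    ∏ j, v j ^ cnt2 k l j = v k * v l := by
  simp only [cnt2, pow_add]
  rw [Finset.prod_mul_distrib]
  simp [pow_ite, Finset.prod_ite_eq]

private lemma prod_cnt4 {m : ℕ} (k l s t : Fin m) (v : Fin m → ℝ) :
    ∏ j, v j ^ cnt4 k l s t j = (v k * v l) * (v s * v t) := by
  simp only [cnt4, pow_add]
  rw [Finset.prod_mul_distrib, prod_cnt2, prod_cnt2]

private lemma collapse_sum {m : ℕ} (M : Fin m → Fin m → ℝ) (Δ : ℝ) :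
    (∑ k, ∑ s, ∑ l, ∑ t, M k l * M s t *
      ((if k = l then (1:ℝ) else 0) * (if s = t then 1 else 0)
       + (if k = s then (1:ℝ) else 0) * (if l = t then 1 else 0)
       + (if k = t then (1:ℝ) else 0) * (if l = s then 1 else 0)
       + (if k = l ∧ l = s ∧ s = t then Δ else 0)))
    = (∑ k, M k k) * (∑ k, M k k) + (∑ k, ∑ l, M k l * M l k)
      + (∑ k, ∑ l, M k l * M k l) + Δ * ∑ k, M k k * M k k := by
  simp only [mul_add, Finset.sum_add_distrib, mul_ite, ite_mul, mul_one, mul_zero,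
    one_mul, zero_mul, ite_and, Finset.sum_ite_eq, Finset.sum_ite_eq', Finset.mem_univ,
    if_true, Finset.sum_ite_irrel, Finset.sum_const_zero]
  rw [Finset.sum_mul_sum, Finset.mul_sum]
  ring_nf
  congr 1
  exact Finset.sum_congr rfl fun x _ => by ring

private lemma moment_eval {m : ℕ} {Ω : Type*} [MeasureSpace Ω]
    [IsProbabilityMeasure (ℙ : Measure Ω)]
    (z : Ω → Fin m → ℝ) (Δ : ℝ)
    (hmean : ∀ k, (∫ ω, z ω k) = 0)
    (hcov : ∀ k l, (∫ ω, z ω k * z ω l) = if k = l then 1 else 0)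
    (h4 : ∀ k, (∫ ω, (z ω k) ^ 4) = 3 + Δ)
    (hfact : ∀ α : Fin m → ℕ, (∑ k, α k) ≤ 4 →
      (∫ ω, ∏ k, (z ω k) ^ (α k)) = ∏ k, ∫ ω, (z ω k) ^ (α k))
    (k l s t : Fin m) :
    (∫ ω, (z ω k * z ω l) * (z ω s * z ω t)) =
      (if k = l then (1:ℝ) else 0) * (if s = t then 1 else 0)
      + (if k = s then (1:ℝ) else 0) * (if l = t then 1 else 0)
      + (if k = t then (1:ℝ) else 0) * (if l = s then 1 else 0)
      + (if k = l ∧ l = s ∧ s = t then Δ else 0) := by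
  have e0 : ∀ j : Fin m, (∫ ω, (z ω j) ^ 0) = 1 := by intro j; simp
  have e1 : ∀ j : Fin m, (∫ ω, (z ω j) ^ 1) = 0 := by
    intro j; simpa using hmean j
  have e2 : ∀ j : Fin m, (∫ ω, (z ω j) ^ 2) = 1 := by
    intro j
    have h := hcov j j
    simp only [if_pos rfl] at h
    simpa [pow_two] using h
  have hrw : (∫ ω, (z ω k * z ω l) * (z ω s * z ω t))
      = ∏ j, ∫ ω, (z ω j) ^ cnt4 k l s t j := by
    rw [← hfact _ (le_of_eq (sum_cnt4 k l s t))]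
    congr 1
    funext ω
    rw [prod_cnt4]
  rw [hrw]
  have hzero : ∀ w : Fin m, cnt4 k l s t w = 1 →
      (∏ j, ∫ ω, (z ω j) ^ cnt4 k l s t j) = 0 := by
    intro w hw
    exact Finset.prod_eq_zero (Finset.mem_univ w) (by rw [hw]; exact e1 w)
  by_cases hkl : k = l
  · subst hkl
    by_cases hks : k = s
    · subst hks
      by_cases hkt : k = t
      · subst hkt
        rw [Finset.prod_eq_single_of_mem k (Finset.mem_univ k)
          (fun j _ hj => by
            have hc : cnt4 k k k k j = 0 := by
              simp [cnt4, cnt2, (Ne.symm hj : ¬ k = j)]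
            rw [hc]; exact e0 j)]
        have hc : cnt4 k k k k k = 4 := by simp [cnt4, cnt2]
        rw [hc, h4 k]
        simp
        ring
      · rw [hzero t (by simp [cnt4, cnt2, hkt])]
        simp [hkt, fun h : k = t => hkt h]
    · by_cases hst : s = t
      · subst hst
        rw [Finset.prod_eq_one (fun j _ => by
          by_cases h1 : j = k
          · subst h1
            have hc : cnt4 j j s s j = 2 := by simp [cnt4, cnt2, Ne.symm hks]
            rw [hc]; exact e2 j
          · by_cases h2 : j = s
            · subst h2
              have hc : cnt4 k k j j j = 2 := by simp [cnt4, cnt2, hks]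
              rw [hc]; exact e2 j
            · have hc : cnt4 k k s s j = 0 := by
                simp [cnt4, cnt2, (Ne.symm h1 : ¬ k = j), (Ne.symm h2 : ¬ s = j)]
              rw [hc]; exact e0 j)]
        simp [hks]
      · by_cases hkt : k = t
        · subst hkt
          rw [hzero s (by simp [cnt4, cnt2, hks, Ne.symm hst])]
          simp [hks, hst, Ne.symm hks]
        · rw [hzero s (by simp [cnt4, cnt2, hks, Ne.symm hst])]
          simp [hks, hkt, hst]
  · by_cases hks : k = s
    · subst hks
      by_cases hlt : l = t
      · subst hlt
        rw [Finset.prod_eq_one (fun j _ => by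
          by_cases h1 : j = k
          · subst h1
            have hc : cnt4 j l j l j = 2 := by simp [cnt4, cnt2, Ne.symm hkl]
            rw [hc]; exact e2 j
          · by_cases h2 : j = l
            · subst h2
              have hc : cnt4 k j k j j = 2 := by simp [cnt4, cnt2, hkl]
              rw [hc]; exact e2 j
            · have hc : cnt4 k l k l j = 0 := by
                simp [cnt4, cnt2, (Ne.symm h1 : ¬ k = j), (Ne.symm h2 : ¬ l = j)]
              rw [hc]; exact e0 j)]
        simp [hkl, Ne.symm hkl]
      · by_cases hkt : k = t
        · subst hkt
          rw [hzero l (by simp [cnt4, cnt2, hkl, hlt, Ne.symm hlt])]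
          simp [hkl, hlt, Ne.symm hkl]
        · rw [hzero l (by simp [cnt4, cnt2, hkl, hlt, Ne.symm hlt])]
          simp [hkl, hlt, hkt]
    · by_cases hkt : k = t
      · subst hkt
        by_cases hls : l = s
        · subst hls
          rw [Finset.prod_eq_one (fun j _ => by
            by_cases h1 : j = k
            · subst h1
              have hc : cnt4 j l l j j = 2 := by simp [cnt4, cnt2, Ne.symm hkl]
              rw [hc]; exact e2 j
            · by_cases h2 : j = l
              · subst h2
                have hc : cnt4 k j j k j = 2 := by simp [cnt4, cnt2, hkl]
                rw [hc]; exact e2 j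
              · have hc : cnt4 k l l k j = 0 := by
                  simp [cnt4, cnt2, (Ne.symm h1 : ¬ k = j), (Ne.symm h2 : ¬ l = j)]
                rw [hc]; exact e0 j)]
          simp [hkl, hks, Ne.symm hkl]
        · rw [hzero l (by simp [cnt4, cnt2, hkl, hls, Ne.symm hls])]
          simp [hkl, hks, hls]
      · rw [hzero k (by simp [cnt4, cnt2, Ne.symm hkl, Ne.symm hks, Ne.symm hkt])]
        simp [hkl, hks, hkt]

/-- **Fourth-moment variance bound (Lemma A.1).**
Let `z = (z_1, …, z_m)` have mean zero, identity covariance, fourth marginal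
moments `3 + Δ`, and mixed moments over distinct coordinates of total order at
most `4` factorizing into products of marginal moments.  Then for every `p × m`
real matrix `A`: `E‖Az‖² = tr(AAᵀ)`,
`E‖Az‖⁴ ≤ (5 + Δ) tr((AᵀA)²) + (tr(AᵀA))²`, and consequently
`Var(‖Az‖²) ≤ (5 + Δ) tr((AAᵀ)²)`. -/
theorem fourth_moment_variance_bound
    {m : ℕ} {Ω : Type*} [MeasureSpace Ω] [IsProbabilityMeasure (ℙ : Measure Ω)]
    (z : Ω → Fin m → ℝ) (hzmeas : Measurable z) (Δ : ℝ)
    (hint : ∀ α : Fin m → ℕ, (∑ k, α k) ≤ 4 →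
      Integrable (fun ω => ∏ k, (z ω k) ^ (α k)))
    (hmean : ∀ k, (∫ ω, z ω k) = 0)
    (hcov : ∀ k l, (∫ ω, z ω k * z ω l) = if k = l then 1 else 0)
    (h4 : ∀ k, (∫ ω, (z ω k) ^ 4) = 3 + Δ)
    (hfact : ∀ α : Fin m → ℕ, (∑ k, α k) ≤ 4 →
      (∫ ω, ∏ k, (z ω k) ^ (α k)) = ∏ k, ∫ ω, (z ω k) ^ (α k)) :
    ∀ (p : ℕ) (A : Matrix (Fin p) (Fin m) ℝ),
      (∫ ω, ∑ i, (A.mulVec (z ω) i) ^ 2) = Matrix.trace (A * Aᵀ) ∧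
      (∫ ω, (∑ i, (A.mulVec (z ω) i) ^ 2) ^ 2) ≤
        (5 + Δ) * Matrix.trace ((Aᵀ * A) * (Aᵀ * A)) + (Matrix.trace (Aᵀ * A)) ^ 2 ∧
      (∫ ω, (∑ i, (A.mulVec (z ω) i) ^ 2) ^ 2)
          - (∫ ω, ∑ i, (A.mulVec (z ω) i) ^ 2) ^ 2 ≤
        (5 + Δ) * Matrix.trace ((A * Aᵀ) * (A * Aᵀ)) := by
  intro p A
  have e2 : ∀ j : Fin m, (∫ ω, (z ω j) ^ 2) = 1 := by
    intro j
    have h := hcov j j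
    simp only [if_pos rfl] at h
    simpa [pow_two] using h
  have int2 : ∀ k l, Integrable (fun ω => z ω k * z ω l) := by
    intro k l
    have h := hint (cnt2 k l) (by rw [sum_cnt2]; norm_num)
    simpa only [prod_cnt2] using h
  have int4 : ∀ k l s t, Integrable (fun ω => (z ω k * z ω l) * (z ω s * z ω t)) := by
    intro k l s t
    have h := hint (cnt4 k l s t) (le_of_eq (sum_cnt4 k l s t))
    simpa only [prod_cnt4] using h
  have intpow : ∀ (k : Fin m) (a : ℕ), a ≤ 4 → Integrable (fun ω => (z ω k) ^ a) := by
    intro k a ha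
    have h := hint (fun j => if k = j then a else 0)
      (by simpa [Finset.sum_ite_eq] using ha)
    simpa [pow_ite, Finset.prod_ite_eq] using h
  set M : Matrix (Fin m) (Fin m) ℝ := Aᵀ * A with hMdef
  have Msym : ∀ a b, M a b = M b a := by
    intro a b
    simp [hMdef, Matrix.mul_apply, Matrix.transpose_apply, mul_comm]
  have hX : ∀ ω, (∑ i, (A.mulVec (z ω) i) ^ 2)
      = ∑ k, ∑ l, M k l * (z ω k * z ω l) := by
    intro ω
    simp only [Matrix.mulVec, dotProduct, pow_two, Finset.sum_mul_sum]
    rw [Finset.sum_comm]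
    refine Finset.sum_congr rfl fun k _ => ?_
    rw [Finset.sum_comm]
    refine Finset.sum_congr rfl fun l _ => ?_
    simp only [hMdef, Matrix.mul_apply, Matrix.transpose_apply, Finset.sum_mul]
    exact Finset.sum_congr rfl fun i _ => by ring
  -- trace identities
  have trM : Matrix.trace (Aᵀ * A) = ∑ k, M k k := by
    simp [hMdef, Matrix.trace, Matrix.diag]
  have trMM : Matrix.trace ((Aᵀ * A) * (Aᵀ * A)) = ∑ k, ∑ l, M k l * M l k := by
    simp [Matrix.trace, Matrix.diag, Matrix.mul_apply, ← hMdef]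
  -- part 1
  have part1 : (∫ ω, ∑ i, (A.mulVec (z ω) i) ^ 2) = Matrix.trace (A * Aᵀ) := by
    have h1 : (∫ ω, ∑ i, (A.mulVec (z ω) i) ^ 2)
        = ∑ k, ∑ l, M k l * ∫ ω, z ω k * z ω l := by
      simp_rw [hX]
      rw [integral_finset_sum _ (fun k _ =>
        integrable_finset_sum _ (fun l _ => (int2 k l).const_mul (M k l)))]
      refine Finset.sum_congr rfl fun k _ => ?_
      rw [integral_finset_sum _ (fun l _ => (int2 k l).const_mul (M k l))]
      exact Finset.sum_congr rfl fun l _ => integral_const_mul _ _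
    rw [h1]
    simp_rw [hcov]
    rw [Matrix.trace_mul_comm, trM]
    simp [Finset.sum_ite_eq, mul_ite]
  -- part 2 exact value
  have hX2 : ∀ ω, ((∑ i, (A.mulVec (z ω) i) ^ 2) ^ 2)
      = ∑ k, ∑ s, ∑ l, ∑ t, M k l * M s t * ((z ω k * z ω l) * (z ω s * z ω t)) := by
    intro ω
    rw [hX ω, pow_two, Finset.sum_mul_sum]
    refine Finset.sum_congr rfl fun k _ => Finset.sum_congr rfl fun s _ => ?_
    rw [Finset.sum_mul_sum]
    exact Finset.sum_congr rfl fun l _ => Finset.sum_congr rfl fun t _ => by ring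
  have part2eq : (∫ ω, (∑ i, (A.mulVec (z ω) i) ^ 2) ^ 2)
      = (∑ k, M k k) * (∑ k, M k k) + (∑ k, ∑ l, M k l * M l k)
        + (∑ k, ∑ l, M k l * M k l) + Δ * ∑ k, M k k * M k k := by
    have h1 : (∫ ω, (∑ i, (A.mulVec (z ω) i) ^ 2) ^ 2)
        = ∑ k, ∑ s, ∑ l, ∑ t, M k l * M s t *
            ∫ ω, (z ω k * z ω l) * (z ω s * z ω t) := by
      simp_rw [hX2]
      rw [integral_finset_sum _ (fun k _ => integrable_finset_sum _ (fun s _ =>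
        integrable_finset_sum _ (fun l _ => integrable_finset_sum _ (fun t _ =>
          (int4 k l s t).const_mul _))))]
      refine Finset.sum_congr rfl fun k _ => ?_
      rw [integral_finset_sum _ (fun s _ =>
        integrable_finset_sum _ (fun l _ => integrable_finset_sum _ (fun t _ =>
          (int4 k l s t).const_mul _)))]
      refine Finset.sum_congr rfl fun s _ => ?_
      rw [integral_finset_sum _ (fun l _ => integrable_finset_sum _ (fun t _ =>
          (int4 k l s t).const_mul _))]
      refine Finset.sum_congr rfl fun l _ => ?_
      rw [integral_finset_sum _ (fun t _ => (int4 k l s t).const_mul _)]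
      exact Finset.sum_congr rfl fun t _ => integral_const_mul _ _
    rw [h1]
    have h2 : ∀ k s l t : Fin m,
        (∫ ω, (z ω k * z ω l) * (z ω s * z ω t)) =
          (if k = l then (1:ℝ) else 0) * (if s = t then 1 else 0)
          + (if k = s then (1:ℝ) else 0) * (if l = t then 1 else 0)
          + (if k = t then (1:ℝ) else 0) * (if l = s then 1 else 0)
          + (if k = l ∧ l = s ∧ s = t then Δ else 0) :=
      fun k s l t => moment_eval z Δ hmean hcov h4 hfact k l s t
    simp_rw [h2]
    exact collapse_sum M Δ
  -- diagonal and trace inequalities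
  have hDpos : (0:ℝ) ≤ ∑ k, M k k * M k k :=
    Finset.sum_nonneg fun k _ => mul_self_nonneg _
  have hDT : (∑ k, M k k * M k k) ≤ ∑ k, ∑ l, M k l * M l k := by
    refine Finset.sum_le_sum fun k _ => ?_
    refine Finset.single_le_sum (f := fun l => M k l * M l k) (fun l _ => ?_)
      (Finset.mem_univ k)
    show (0:ℝ) ≤ M k l * M l k
    rw [Msym l k]
    exact mul_self_nonneg _
  have hTpos : (0:ℝ) ≤ ∑ k, ∑ l, M k l * M l k := le_trans hDpos hDT
  have hsymsum : (∑ k, ∑ l, M k l * M k l) = ∑ k, ∑ l, M k l * M l k := by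
    refine Finset.sum_congr rfl fun k _ => Finset.sum_congr rfl fun l _ => ?_
    rw [Msym l k]
  -- Δ-dependent bound
  have hkey : Δ * (∑ k, M k k * M k k) ≤ (3 + Δ) * ∑ k, ∑ l, M k l * M l k := by
    rcases isEmpty_or_nonempty (Fin m) with hE | hNE
    · simp [Finset.univ_eq_empty]
    · obtain ⟨k0⟩ := hNE
      have hz4 : Integrable (fun ω => (z ω k0) ^ 4) := intpow k0 4 le_rfl
      have hz2 : Integrable (fun ω => (z ω k0) ^ 2) := intpow k0 2 (by norm_num)
      have hnn : (0:ℝ) ≤ ∫ ω, ((z ω k0) ^ 2 - 1) ^ 2 :=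
        integral_nonneg fun ω => sq_nonneg _
      have hexp : (∫ ω, ((z ω k0) ^ 2 - 1) ^ 2)
          = (∫ ω, (z ω k0) ^ 4) - 2 * (∫ ω, (z ω k0) ^ 2) + 1 := by
        have hfun : ∀ ω, ((z ω k0) ^ 2 - 1) ^ 2
            = ((z ω k0) ^ 4 - 2 * (z ω k0) ^ 2) + 1 := fun ω => by ring
        simp_rw [hfun]
        have hI2 : Integrable (fun ω => 2 * (z ω k0) ^ 2) := hz2.const_mul 2
        have hI1 : Integrable (fun ω => (z ω k0) ^ 4 - 2 * (z ω k0) ^ 2) := hz4.sub hI2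
        rw [integral_add hI1 (integrable_const 1), integral_sub hz4 hI2,
          integral_const_mul, integral_const]
        simp
      rw [hexp, h4 k0, e2 k0] at hnn
      have hq : (0:ℝ) ≤ 2 + Δ := by linarith
      have h5 : (0:ℝ) ≤ (2 + Δ) *
          ((∑ k, ∑ l, M k l * M l k) - ∑ k, M k k * M k k) :=
        mul_nonneg hq (by linarith)
      nlinarith [hDpos, hDT, hTpos]
  have trsq : Matrix.trace ((Aᵀ * A) * (Aᵀ * A))
      = Matrix.trace ((A * Aᵀ) * (A * Aᵀ)) := by
    calc Matrix.trace ((Aᵀ * A) * (Aᵀ * A))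
        = Matrix.trace (Aᵀ * (A * Aᵀ * A)) := by rw [Matrix.mul_assoc, Matrix.mul_assoc]
      _ = Matrix.trace ((A * Aᵀ * A) * Aᵀ) := Matrix.trace_mul_comm _ _
      _ = Matrix.trace ((A * Aᵀ) * (A * Aᵀ)) := by rw [Matrix.mul_assoc]
  have trABBA : Matrix.trace (A * Aᵀ) = Matrix.trace (Aᵀ * A) :=
    Matrix.trace_mul_comm _ _
  -- finish
  refine ⟨part1, ?_, ?_⟩
  · rw [part2eq, trMM, trM, pow_two]
    rw [hsymsum]
    nlinarith [hkey, hTpos]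
  · rw [part2eq, part1, trABBA, trM, ← trsq, trMM, pow_two, hsymsum]
    nlinarith [hkey, hTpos]
end
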